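/- arXiv:2405.18294 — 7 statements merged into one kernel-verified Lean document; each statement's English description precedes it below -/
import Mathlib

section
/- Let D be a disk of radius r(K) contained in a planar convex body K with r(K) < ω(K)/2. Then the boundaries ∂K and ∂D meet in at least three points forming the vertices of an acute-angled triangle; in particular ∂K ∩ ∂D cannot consist only of points lying in a closed half-plane whose boundary passes through the center of D. -/
open Metric Set MeasureTheory Pointwise

/-- The minimal width of a planar set: the least length of its orthogonal
projection onto a direction. -/
noncomputable def minWidth (K : Set (EuclideanSpace ℝ (Fin 2))) : ℝ :=
  ⨅ θ : Metric.sphere (0 : EuclideanSpace ℝ (Fin 2)) 1,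
    (sSup ((fun x => (inner ℝ x θ.1 : ℝ)) '' K) - sInf ((fun x => (inner ℝ x θ.1 : ℝ)) '' K))

/-- The inradius: radius of a largest disk contained in the set. -/
noncomputable def inradius (K : Set (EuclideanSpace ℝ (Fin 2))) : ℝ :=
  sSup {r : ℝ | ∃ c, Metric.closedBall c r ⊆ K}

/-- The area of a planar set. -/
noncomputable def area (K : Set (EuclideanSpace ℝ (Fin 2))) : ℝ := (volume K).toReal

/-- A set is an equilateral triangle if it is the convex hull of three points at
equal positive pairwise distances. -/
def IsEquilateralTriangle (E : Set (EuclideanSpace ℝ (Fin 2))) : Prop :=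
  ∃ a b c : EuclideanSpace ℝ (Fin 2), dist a b = dist b c ∧ dist b c = dist c a ∧
    0 < dist a b ∧ E = convexHull ℝ {a, b, c}

/-- Hausdorff asymmetry from equilateral triangles of the same width. -/
noncomputable def hausdorffAsym (K : Set (EuclideanSpace ℝ (Fin 2))) : ℝ :=
  sInf {d : ℝ | ∃ E, IsEquilateralTriangle E ∧ minWidth E = minWidth K ∧
    d = Metric.hausdorffDist K E / minWidth E}

/-- Fraenkel asymmetry from equilateral triangles of the same width. -/
noncomputable def fraenkelAsym (K : Set (EuclideanSpace ℝ (Fin 2))) : ℝ :=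
  sInf {d : ℝ | ∃ E, IsEquilateralTriangle E ∧ minWidth E = minWidth K ∧
    d = area (symmDiff K E) / (minWidth E)^2}

/-- The point (x, y) of the Euclidean plane. -/
noncomputable def pt (x y : ℝ) : EuclideanSpace ℝ (Fin 2) :=
  (WithLp.equiv 2 (Fin 2 → ℝ)).symm ![x, y]

/-- The function φ of the paper. -/
noncomputable def phi (x : ℝ) : ℝ :=
  3 * x ^ 2 * (Real.pi / 3 - Real.arccos (x / (1 - x))) + 3 * x * Real.sqrt (1 - 2 * x)

/-- The function ψ of the paper. -/
noncomputable def psi (x y : ℝ) : ℝ :=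
  Real.pi * x ^ 2 + 2 * x * Real.sqrt (1 - 2 * x) - 2 * x ^ 2 * Real.arccos (x / (1 - x))
    + x * Real.sqrt (y ^ 2 - x ^ 2) - x ^ 2 * Real.arccos (x / y)

open scoped RealInnerProductSpace

local notation "Pl" => EuclideanSpace ℝ (Fin 2)

noncomputable def rot (v : Pl) : Pl := pt (-(v 1)) (v 0)

@[simp] lemma rot_apply0 (v : Pl) : rot v 0 = -(v 1) := by
  simp [rot, pt]

@[simp] lemma rot_apply1 (v : Pl) : rot v 1 = v 0 := by
  simp [rot, pt]

lemma inner_pl (x y : Pl) : ⟪x, y⟫ = x 0 * y 0 + x 1 * y 1 := by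
  simp [PiLp.inner_apply, Fin.sum_univ_two, RCLike.inner_apply]; ring

lemma inner_rot (v : Pl) : ⟪v, rot v⟫ = 0 := by
  simp [inner_pl]; ring

lemma norm_rot (v : Pl) : ‖rot v‖ = ‖v‖ := by
  have h1 : ‖rot v‖ ^ 2 = ‖v‖ ^ 2 := by
    rw [← real_inner_self_eq_norm_sq, ← real_inner_self_eq_norm_sq]
    rw [inner_pl, inner_pl, rot_apply0, rot_apply1]; ring
  nlinarith [norm_nonneg v, norm_nonneg (rot v), h1]

lemma perp_decomp {v x : Pl} (hv : v ≠ 0) (h : ⟪x, v⟫ = 0) :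
    ∃ t : ℝ, x = t • (‖v‖⁻¹ • rot v) := by
  have hnv : ‖v‖ ≠ 0 := norm_ne_zero_iff.mpr hv
  have hv2 : ⟪v, v⟫ ≠ 0 := by
    rw [real_inner_self_eq_norm_sq]; positivity
  have h' := h
  rw [inner_pl] at h'
  have hn2 : ‖v‖ ^ 2 = v 0 ^ 2 + v 1 ^ 2 := by rw [← real_inner_self_eq_norm_sq, inner_pl]; ring
  have key : ⟪v, v⟫ • x = ⟪x, rot v⟫ • rot v := by
    ext i
    fin_cases i
    · simp [inner_pl, PiLp.smul_apply, smul_eq_mul]; linear_combination (v 0) * h' + x 0 * hn2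
    · simp [inner_pl, PiLp.smul_apply, smul_eq_mul]; linear_combination (v 1) * h' + x 1 * hn2
  refine ⟨(⟪v, v⟫⁻¹ * ⟪x, rot v⟫) * ‖v‖, ?_⟩
  have h2 : ((⟪v, v⟫⁻¹ * ⟪x, rot v⟫) * ‖v‖) • (‖v‖⁻¹ • rot v)
      = (⟪v, v⟫⁻¹ * ⟪x, rot v⟫) • rot v := by
    rw [smul_smul]; congr 1
    rw [mul_assoc, mul_inv_cancel₀ hnv, mul_one]
  rw [h2, mul_smul, ← key, ← mul_smul, inv_mul_cancel₀ hv2, one_smul]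

lemma two_point {r : ℝ} (hr : 0 < r) {x y : Pl} (hx : ‖x‖ = r) (hy : ‖y‖ = r)
    {a b : ℝ} (ha : 0 ≤ a) (hb : 0 ≤ b) (hab : a + b = 1)
    (h : a • x + b • y = 0) : y = -x := by
  have h1 : a • x = -(b • y) := by
    have := h
    rw [add_eq_zero_iff_eq_neg] at this
    exact this
  have h2 : ‖a • x‖ = ‖b • y‖ := by rw [h1, norm_neg]
  rw [norm_smul, norm_smul, hx, hy, Real.norm_eq_abs, Real.norm_eq_abs,
    abs_of_nonneg ha, abs_of_nonneg hb] at h2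
  have hab' : a = b := by
    have := mul_right_cancel₀ (ne_of_gt hr) h2
    exact this
  have ha2 : a = 1/2 := by linarith
  have hb2 : b = 1/2 := by linarith
  have h3 : x + y = 0 := by
    have := congrArg (fun z => (2:ℝ) • z) h
    simp only [smul_add, smul_smul, ha2, hb2, smul_zero] at this
    norm_num at this
    exact this
  exact eq_neg_of_add_eq_zero_right h3

lemma acute_aux {r w1 w2 w3 : ℝ} {x1 x2 x3 : Pl}
    (h1 : ‖x1‖ = r) (h2 : ‖x2‖ = r) (h3 : ‖x3‖ = r)
    (hw1 : 0 < w1) (hw2 : 0 < w2) (hw3 : 0 < w3)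
    (hsum : w1 • x1 + w2 • x2 + w3 • x3 = 0)
    (hna : x2 + x3 ≠ 0) : 0 < ⟪x2 - x1, x3 - x1⟫ := by
  have key : ⟪w1 • x1 + w2 • x2 + w3 • x3, x2 + x3⟫ = 0 := by
    rw [hsum, inner_zero_left]
  have e1 : ⟪x1, x1⟫ = r ^ 2 := by rw [real_inner_self_eq_norm_sq, h1]
  have e2 : ⟪x2, x2⟫ = r ^ 2 := by rw [real_inner_self_eq_norm_sq, h2]
  have e3 : ⟪x3, x3⟫ = r ^ 2 := by rw [real_inner_self_eq_norm_sq, h3]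
  have hpos : 0 < ‖x2 + x3‖ ^ 2 := by
    have : 0 < ‖x2 + x3‖ := norm_pos_iff.mpr hna
    positivity
  have hexp : ‖x2 + x3‖ ^ 2 = r ^ 2 + 2 * ⟪x2, x3⟫ + r ^ 2 := by
    rw [← real_inner_self_eq_norm_sq]
    rw [inner_add_left, inner_add_right, inner_add_right, e2, e3, real_inner_comm x3 x2]
    ring
  simp only [inner_add_left, inner_add_right, real_inner_smul_left] at key
  rw [e2, e3, real_inner_comm x3 x2] at key
  rw [inner_sub_left, inner_sub_right, inner_sub_right, e1]
  have c1 : ⟪x2, x3⟫ = ⟪x3, x2⟫ := real_inner_comm _ _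
  have c2 : ⟪x2, x1⟫ = ⟪x1, x2⟫ := real_inner_comm _ _
  have c3 : ⟪x1, x3⟫ = ⟪x3, x1⟫ := real_inner_comm _ _
  nlinarith [key, hpos, hexp, c1, c2, c3, mul_pos hw2 hw3, mul_pos hw1 hw2,
    mul_pos hw1 hw3, sq_nonneg r]

lemma support_at {K : Set Pl} (hKc : IsCompact K) (hKconv : Convex ℝ K)
    (hKint : (interior K).Nonempty) {o P : Pl} {r : ℝ} (hr : 0 < r)
    (hball : Metric.closedBall o r ⊆ K) (hPf : P ∈ frontier K) (hPs : ‖P - o‖ = r) :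
    ∀ a ∈ K, ⟪a, P - o⟫ ≤ ⟪P, P - o⟫ := by
  have hKcl : IsClosed K := hKc.isClosed
  have hPnotint : P ∉ interior K := by
    intro h
    rw [hKcl.frontier_eq] at hPf
    exact hPf.2 h
  obtain ⟨f, hf⟩ := geometric_hahn_banach_open_point (hKconv.interior) isOpen_interior hPnotint
  -- extend f a ≤ f P to all of K
  obtain ⟨x0, hx0⟩ := hKint
  have haK : ∀ a ∈ K, f a ≤ f P := by
    intro a ha
    have harg : ∀ n : ℕ, f ((1/((n:ℝ)+2)) • x0 + (1 - 1/((n:ℝ)+2)) • a) < f P := by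
      intro n
      have hn1 : 0 < 1/((n:ℝ)+2) := by positivity
      have hn2 : (0:ℝ) ≤ 1 - 1/((n:ℝ)+2) := by
        have : 1/((n:ℝ)+2) ≤ 1 := by
          rw [div_le_one (by positivity)]; linarith
        linarith
      exact hf _ (hKconv.combo_interior_closure_mem_interior hx0
        (subset_closure ha) hn1 hn2 (by ring))
    have htend : Filter.Tendsto (fun n : ℕ => (1/((n:ℝ)+2)) • x0 + (1 - 1/((n:ℝ)+2)) • a)
        Filter.atTop (nhds a) := by
      have h0 : Filter.Tendsto (fun n : ℕ => 1/((n:ℝ)+2)) Filter.atTop (nhds 0) := by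
        apply Filter.Tendsto.div_atTop tendsto_const_nhds
        exact Filter.tendsto_atTop_add_const_right _ 2 tendsto_natCast_atTop_atTop
      have h1 : Filter.Tendsto (fun n : ℕ => (1:ℝ) - 1/((n:ℝ)+2)) Filter.atTop (nhds (1 - 0)) :=
        (tendsto_const_nhds.sub h0)
      have := ((h0.smul_const x0).add (h1.smul_const a))
      simpa using this
    have := Filter.Tendsto.comp (f.continuous.tendsto a) htend
    exact le_of_tendsto this (Filter.Eventually.of_forall fun n => (harg n).le)
  -- represent f by a vector
  set φ : Pl := (InnerProductSpace.toDual ℝ Pl).symm f with hφdef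
  have hφ : ∀ x : Pl, ⟪φ, x⟫ = f x := fun x => InnerProductSpace.toDual_symm_apply
  have hφ0 : φ ≠ 0 := by
    intro h
    have h1 := hf x0 hx0
    rw [← hφ x0, ← hφ P, h] at h1
    simp at h1
  have hnφ : 0 < ‖φ‖ := norm_pos_iff.mpr hφ0
  -- the ball point in direction φ
  have hy : o + (r * ‖φ‖⁻¹) • φ ∈ K := by
    apply hball
    rw [Metric.mem_closedBall, dist_eq_norm]
    have : o + (r * ‖φ‖⁻¹) • φ - o = (r * ‖φ‖⁻¹) • φ := by abel
    rw [this, norm_smul, Real.norm_eq_abs, abs_of_nonneg (by positivity)]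
    rw [mul_assoc, inv_mul_cancel₀ (ne_of_gt hnφ), mul_one]
  have hkey : r * ‖φ‖ ≤ ⟪φ, P - o⟫ := by
    have := haK _ hy
    rw [← hφ, ← hφ, inner_add_right, real_inner_smul_right, real_inner_self_eq_norm_sq] at this
    have h2 : r * ‖φ‖⁻¹ * ‖φ‖ ^ 2 = r * ‖φ‖ := by
      field_simp
    rw [h2] at this
    rw [inner_sub_right]
    linarith
  have hCS : ⟪φ, P - o⟫ ≤ ‖φ‖ * r := by
    calc ⟪φ, P - o⟫ ≤ ‖φ‖ * ‖P - o‖ := real_inner_le_norm _ _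
    _ = ‖φ‖ * r := by rw [hPs]
  have heq : ⟪φ, P - o⟫ = ‖φ‖ * ‖P - o‖ := by rw [hPs]; linarith
  have heq2 : ‖P - o‖ • φ = ‖φ‖ • (P - o) := inner_eq_norm_mul_iff_real.mp heq
  rw [hPs] at heq2
  -- conclude
  intro a ha
  have h1 : ⟪a, r • φ⟫ ≤ ⟪P, r • φ⟫ := by
    rw [real_inner_smul_right, real_inner_smul_right, real_inner_comm φ a,
      real_inner_comm φ P, hφ, hφ]
    exact mul_le_mul_of_nonneg_left (haK a ha) hr.le
  rw [heq2, real_inner_smul_right, real_inner_smul_right] at h1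
  have := mul_le_mul_of_nonneg_left h1 (le_of_lt (inv_pos.mpr hnφ))
  calc ⟪a, P - o⟫ = ‖φ‖⁻¹ * (‖φ‖ * ⟪a, P - o⟫) := by field_simp
  _ ≤ ‖φ‖⁻¹ * (‖φ‖ * ⟪P, P - o⟫) := this
  _ = ⟪P, P - o⟫ := by field_simp

lemma width_le {K : Set Pl} (hKc : IsCompact K) (hKne : K.Nonempty)
    {o x : Pl} {r : ℝ} (hr : 0 < r) (hx : ‖x‖ = r)
    (h1 : ∀ a ∈ K, ⟪a, x⟫ ≤ ⟪o + x, x⟫)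
    (h2 : ∀ a ∈ K, ⟪a, -x⟫ ≤ ⟪o - x, -x⟫) :
    minWidth K ≤ 2 * r := by
  have hcont : ∀ u : Pl, Continuous (fun a : Pl => (inner ℝ a u : ℝ)) := by
    intro u
    exact continuous_id.inner continuous_const
  have hbdd : BddBelow (Set.range fun θ : Metric.sphere (0 : Pl) 1 =>
      (sSup ((fun a => (inner ℝ a θ.1 : ℝ)) '' K) - sInf ((fun a => (inner ℝ a θ.1 : ℝ)) '' K))) := by
    refine ⟨0, ?_⟩
    rintro y ⟨θ, rfl⟩
    have himg : ((fun a => (inner ℝ a θ.1 : ℝ)) '' K).Nonempty := hKne.image _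
    have hcpt := hKc.image (hcont θ.1)
    have := csInf_le_csSup himg hcpt.bddBelow hcpt.bddAbove
    simp only [sub_nonneg]
    exact this
  set θ : Pl := r⁻¹ • x with hθdef
  have hθn : ‖θ‖ = 1 := by
    rw [hθdef, norm_smul, Real.norm_eq_abs, abs_of_nonneg (by positivity), hx]
    field_simp
  have hθmem : θ ∈ Metric.sphere (0 : Pl) 1 := by
    rw [mem_sphere_iff_norm, sub_zero]; exact hθn
  have hle := ciInf_le hbdd (⟨θ, hθmem⟩ : Metric.sphere (0 : Pl) 1)
  refine le_trans hle ?_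
  -- bound the width in direction θ
  have hup : sSup ((fun a => (inner ℝ a θ : ℝ)) '' K) ≤ r⁻¹ * ⟪o + x, x⟫ := by
    apply csSup_le (hKne.image _)
    rintro y ⟨a, ha, rfl⟩
    have := h1 a ha
    simp only [hθdef, real_inner_smul_right]
    exact mul_le_mul_of_nonneg_left this (by positivity)
  have hlo : r⁻¹ * ⟪o - x, x⟫ ≤ sInf ((fun a => (inner ℝ a θ : ℝ)) '' K) := by
    apply le_csInf (hKne.image _)
    rintro y ⟨a, ha, rfl⟩
    have h2' := h2 a ha
    rw [inner_neg_right, inner_neg_right, neg_le_neg_iff] at h2'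
    simp only [hθdef, real_inner_smul_right]
    exact mul_le_mul_of_nonneg_left h2' (by positivity)
  have hxx : ⟪x, x⟫ = r ^ 2 := by rw [real_inner_self_eq_norm_sq, hx]
  have e1 : ⟪o + x, x⟫ = ⟪o, x⟫ + r ^ 2 := by rw [inner_add_left, hxx]
  have e2 : ⟪o - x, x⟫ = ⟪o, x⟫ - r ^ 2 := by rw [inner_sub_left, hxx]
  have : r⁻¹ * ⟪o + x, x⟫ - r⁻¹ * ⟪o - x, x⟫ = 2 * r := by
    rw [e1, e2]; field_simp; ring
  linarith [hup, hlo]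

lemma exists_bigger {K : Set Pl} (hKc : IsCompact K) (hKconv : Convex ℝ K)
    (hKne : K.Nonempty) {o vs : Pl} {r : ℝ} (hr : 0 ≤ r)
    (hball : Metric.closedBall o r ⊆ K) (hvs : vs ≠ 0)
    (hstrict : ∀ P ∈ frontier K ∩ Metric.sphere o r, 0 < ⟪P - o, vs⟫) :
    ∃ c ρ, r < ρ ∧ Metric.closedBall c ρ ⊆ K := by
  classical
  -- bound on K
  obtain ⟨R0, hR0⟩ := hKc.isBounded.subset_closedBall 0
  set R : ℝ := max R0 0 with hRdef
  have hRK : ∀ a ∈ K, ‖a‖ ≤ R := by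
    intro a ha
    have := hR0 ha
    rw [Metric.mem_closedBall, dist_zero_right] at this
    exact le_trans this (le_max_left _ _)
  have hRpos : 0 ≤ R := le_max_right _ _
  -- support function
  set h : Pl → ℝ := fun u => sSup ((fun a => ⟪a, u⟫) '' K) with hhdef
  have himgne : ∀ u : Pl, ((fun a => ⟪a, u⟫) '' K).Nonempty := fun u => hKne.image _
  have himgbdd : ∀ u : Pl, BddAbove ((fun a => ⟪a, u⟫) '' K) := by
    intro u
    exact (hKc.image (continuous_id.inner continuous_const)).bddAbove
  have hmem : ∀ u : Pl, ∀ a ∈ K, ⟪a, u⟫ ≤ h u := by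
    intro u a ha
    exact le_csSup (himgbdd u) ⟨a, ha, rfl⟩
  have hlub : ∀ (u : Pl) (c : ℝ), (∀ a ∈ K, ⟪a, u⟫ ≤ c) → h u ≤ c := by
    intro u c hc
    apply csSup_le (himgne u)
    rintro y ⟨a, ha, rfl⟩
    exact hc a ha
  -- Lipschitz and continuity
  have hLip : ∀ u u' : Pl, h u ≤ h u' + R * ‖u - u'‖ := by
    intro u u'
    apply hlub
    intro a ha
    have : ⟪a, u⟫ = ⟪a, u'⟫ + ⟪a, u - u'⟫ := by
      rw [← inner_add_right]; congr 1; abel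
    rw [this]
    have hCS : ⟪a, u - u'⟫ ≤ ‖a‖ * ‖u - u'‖ := real_inner_le_norm _ _
    have := hmem u' a ha
    have hmul : ‖a‖ * ‖u - u'‖ ≤ R * ‖u - u'‖ :=
      mul_le_mul_of_nonneg_right (hRK a ha) (norm_nonneg _)
    linarith
  have hcont : Continuous h := by
    apply LipschitzWith.continuous (K := Real.toNNReal R)
    apply LipschitzWith.of_dist_le_mul
    intro u u'
    rw [Real.dist_eq, abs_le]
    constructor
    · have := hLip u' u
      rw [dist_eq_norm, Real.coe_toNNReal _ hRpos]
      have hn : ‖u' - u‖ = ‖u - u'‖ := norm_sub_rev _ _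
      rw [← hn]; linarith
    · have := hLip u u'
      rw [dist_eq_norm, Real.coe_toNNReal _ hRpos]
      linarith
  -- basic support bounds
  have hg : ∀ u : Pl, ‖u‖ = 1 → ⟪o, u⟫ + r ≤ h u := by
    intro u hu
    have hmemball : o + r • u ∈ Metric.closedBall o r := by
      rw [Metric.mem_closedBall, dist_eq_norm]
      have : o + r • u - o = r • u := by abel
      rw [this, norm_smul, Real.norm_eq_abs, abs_of_nonneg hr, hu, mul_one]
    have := hmem u _ (hball hmemball)
    rw [inner_add_left, real_inner_smul_left, real_inner_self_eq_norm_sq, hu] at this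
    simpa using this
  have hcontact : ∀ u : Pl, ‖u‖ = 1 → h u ≤ ⟪o, u⟫ + r →
      o + r • u ∈ frontier K ∩ Metric.sphere o r := by
    intro u hu hle
    have hmemball : o + r • u ∈ Metric.closedBall o r := by
      rw [Metric.mem_closedBall, dist_eq_norm]
      have : o + r • u - o = r • u := by abel
      rw [this, norm_smul, Real.norm_eq_abs, abs_of_nonneg hr, hu, mul_one]
    have hK : o + r • u ∈ K := hball hmemball
    have hnotint : o + r • u ∉ interior K := by
      intro hint
      rw [mem_interior_iff_mem_nhds, Metric.mem_nhds_iff] at hint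
      obtain ⟨ε, hε, hsub⟩ := hint
      have hq : o + (r + ε/2) • u ∈ K := by
        apply hsub
        rw [Metric.mem_ball, dist_eq_norm]
        have : o + (r + ε/2) • u - (o + r • u) = (ε/2) • u := by
          rw [add_smul]; abel
        rw [this, norm_smul, Real.norm_eq_abs, abs_of_nonneg (by positivity), hu, mul_one]
        linarith
      have := hmem u _ hq
      rw [inner_add_left, real_inner_smul_left, real_inner_self_eq_norm_sq, hu] at this
      simp only [one_pow, mul_one] at this
      linarith
    constructor
    · rw [hKc.isClosed.frontier_eq]
      exact ⟨hK, hnotint⟩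
    · rw [Metric.mem_sphere, dist_eq_norm]
      have : o + r • u - o = r • u := by abel
      rw [this, norm_smul, Real.norm_eq_abs, abs_of_nonneg hr, hu, mul_one]
  -- strict bound on the back half-sphere of directions
  set B : Set Pl := Metric.sphere (0 : Pl) 1 ∩ {u | ⟪u, vs⟫ ≤ 0} with hBdef
  have hBc : IsCompact B :=
    (isCompact_sphere (0 : Pl) 1).inter_right
      (isClosed_le (continuous_id.inner continuous_const) continuous_const)
  have hBne : B.Nonempty := by
    refine ⟨-(‖vs‖⁻¹ • vs), ?_, ?_⟩
    · rw [mem_sphere_iff_norm, sub_zero, norm_neg, norm_smul, Real.norm_eq_abs,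
        abs_of_nonneg (by positivity), inv_mul_cancel₀ (norm_ne_zero_iff.mpr hvs)]
    · simp only [Set.mem_setOf_eq, inner_neg_left, real_inner_smul_left]
      rw [real_inner_self_eq_norm_sq]
      have : 0 < ‖vs‖ := norm_pos_iff.mpr hvs
      rw [neg_nonpos]
      positivity
  have hunitnorm : ∀ u ∈ B, ‖u‖ = 1 := by
    intro u hu
    have := hu.1
    rwa [mem_sphere_iff_norm, sub_zero] at this
  have hBgt : ∀ u ∈ B, ⟪o, u⟫ + r < h u := by
    intro u hu
    rcases lt_or_eq_of_le (hg u (hunitnorm u hu)) with hlt | heq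
    · exact hlt
    · exfalso
      have hP := hcontact u (hunitnorm u hu) heq.ge
      have := hstrict _ hP
      have hsimp : (o + r • u) - o = r • u := by abel
      rw [hsimp, real_inner_smul_left] at this
      have hu2' : ⟪u, vs⟫ ≤ 0 := hu.2
      have hx : 0 ≤ r * (-⟪u, vs⟫) := mul_nonneg hr (by linarith)
      nlinarith
  -- min of (h u - ⟪o,u⟫) on B
  obtain ⟨u1, hu1B, hu1min⟩ := hBc.exists_isMinOn hBne
    ((hcont.sub (continuous_const.inner continuous_id)).continuousOn)
  set m : ℝ := h u1 - ⟪o, u1⟫ with hmdef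
  have hrm : r < m := hBgt u1 hu1B |> fun hx => by rw [hmdef]; linarith
  set t : ℝ := (m - r)/2 with htdef
  have ht : 0 < t := by rw [htdef]; linarith
  set vhat : Pl := ‖vs‖⁻¹ • vs with hvhatdef
  have hvhatn : ‖vhat‖ = 1 := by
    rw [hvhatdef, norm_smul, Real.norm_eq_abs, abs_of_nonneg (by positivity),
      inv_mul_cancel₀ (norm_ne_zero_iff.mpr hvs)]
  -- min of G on the sphere
  set G : Pl → ℝ := fun u => h u - ⟪o, u⟫ + t * ⟪vhat, u⟫ with hGdef
  have hGcont : Continuous G :=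
    (hcont.sub (continuous_const.inner continuous_id)).add
      (continuous_const.mul (continuous_const.inner continuous_id))
  obtain ⟨us, husmem, husmin⟩ := (isCompact_sphere (0 : Pl) 1).exists_isMinOn
    ⟨-(‖vs‖⁻¹ • vs), by
      rw [mem_sphere_iff_norm, sub_zero, norm_neg, norm_smul, Real.norm_eq_abs,
        abs_of_nonneg (by positivity), inv_mul_cancel₀ (norm_ne_zero_iff.mpr hvs)]⟩
    hGcont.continuousOn
  have husn : ‖us‖ = 1 := by rwa [mem_sphere_iff_norm, sub_zero] at husmem
  have hGr : r < G us := by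
    rcases le_or_gt ⟪us, vs⟫ 0 with hc | hc
    · have husB : us ∈ B := ⟨by rwa [mem_sphere_iff_norm, sub_zero], hc⟩
      have h1 : m ≤ h us - ⟪o, us⟫ := hu1min husB
      have h2 : -1 ≤ ⟪vhat, us⟫ := by
        have := abs_real_inner_le_norm vhat us
        rw [hvhatn, husn, one_mul] at this
        have := abs_le.mp this
        linarith [this.1]
      have : G us ≥ m - t := by
        rw [hGdef]
        simp only
        nlinarith
      linarith
    · have h1 : r ≤ h us - ⟪o, us⟫ := by linarith [hg us husn]
      have h2 : 0 < ⟪vhat, us⟫ := by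
        rw [hvhatdef, real_inner_smul_left]
        have : 0 < ‖vs‖ := norm_pos_iff.mpr hvs
        have hcomm : ⟪vs, us⟫ = ⟪us, vs⟫ := real_inner_comm _ _
        rw [hcomm]
        positivity
      have : 0 < t * ⟪vhat, us⟫ := mul_pos ht h2
      rw [hGdef]
      simp only
      linarith
  -- the bigger ball
  refine ⟨o - t • vhat, G us, hGr, ?_⟩
  -- show closedBall ⊆ K by separation
  intro z hz
  by_contra hzK
  obtain ⟨f, s, hfK, hfz⟩ := geometric_hahn_banach_closed_point hKconv hKc.isClosed hzK
  set φ : Pl := (InnerProductSpace.toDual ℝ Pl).symm f with hφdef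
  have hφ : ∀ x : Pl, ⟪φ, x⟫ = f x := fun x => InnerProductSpace.toDual_symm_apply
  have hφ0 : φ ≠ 0 := by
    intro h0
    obtain ⟨a0, ha0⟩ := hKne
    have h1 := hfK a0 ha0
    rw [← hφ a0, h0] at h1
    rw [← hφ z, h0] at hfz
    simp only [inner_zero_left] at h1 hfz
    linarith
  have hnφ : 0 < ‖φ‖ := norm_pos_iff.mpr hφ0
  set u : Pl := ‖φ‖⁻¹ • φ with hudef
  have hun : ‖u‖ = 1 := by
    rw [hudef, norm_smul, Real.norm_eq_abs, abs_of_nonneg (by positivity),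
      inv_mul_cancel₀ (ne_of_gt hnφ)]
  have hhu : h u ≤ ‖φ‖⁻¹ * s := by
    apply hlub
    intro a ha
    have := (hfK a ha).le
    rw [← hφ a] at this
    rw [hudef, real_inner_smul_right, real_inner_comm φ a]
    exact mul_le_mul_of_nonneg_left this (by positivity)
  have hzu : ‖φ‖⁻¹ * s < ⟪z, u⟫ := by
    rw [hudef, real_inner_smul_right, real_inner_comm φ z, hφ z]
    exact mul_lt_mul_of_pos_left hfz (by positivity)
  -- but also ⟪z, u⟫ ≤ h u
  have hzball : ⟪z, u⟫ ≤ ⟪o - t • vhat, u⟫ + G us := by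
    have hd : ⟪z - (o - t • vhat), u⟫ ≤ G us := by
      have hCS : ⟪z - (o - t • vhat), u⟫ ≤ ‖z - (o - t • vhat)‖ * ‖u‖ :=
        real_inner_le_norm _ _
      rw [hun, mul_one] at hCS
      have hdist : ‖z - (o - t • vhat)‖ ≤ G us := by
        rw [Metric.mem_closedBall, dist_eq_norm] at hz
        exact hz
      linarith
    have : ⟪z, u⟫ = ⟪o - t • vhat, u⟫ + ⟪z - (o - t • vhat), u⟫ := by
      rw [← inner_add_left]; congr 1; abel
    linarith
  have hfinal : ⟪o - t • vhat, u⟫ + G us ≤ h u := by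
    have hGus : G us ≤ G u := husmin (by rw [mem_sphere_iff_norm, sub_zero]; exact hun)
    have : ⟪o - t • vhat, u⟫ = ⟪o, u⟫ - t * ⟪vhat, u⟫ := by
      rw [inner_sub_left, real_inner_smul_left]
    rw [this, hGdef] at *
    simp only at hGus ⊢
    linarith
  linarith

lemma no_antipodal {K : Set Pl} (hKc : IsCompact K) (hKconv : Convex ℝ K)
    (hKint : (interior K).Nonempty) {o : Pl} {r : ℝ} (hr : 0 < r)
    (hball : Metric.closedBall o r ⊆ K) (hw2 : 2 * r < minWidth K) :
    ∀ x : Pl, ‖x‖ = r → o + x ∈ frontier K ∩ Metric.sphere o r →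
      o - x ∈ frontier K ∩ Metric.sphere o r → False := by
  have hKne : K.Nonempty := hKint.mono interior_subset
  intro x hx h1 h2
  have hs1 : ‖(o + x) - o‖ = r := by
    have : o + x - o = x := by abel
    rw [this, hx]
  have hs2 : ‖(o - x) - o‖ = r := by
    have : o - x - o = -x := by abel
    rw [this, norm_neg, hx]
  have hsupp1 := support_at hKc hKconv hKint hr hball h1.1 hs1
  have hsupp2 := support_at hKc hKconv hKint hr hball h2.1 hs2
  have e1 : (o + x) - o = x := by abel
  have e2 : (o - x) - o = -x := by abel
  rw [e1] at hsupp1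
  rw [e2] at hsupp2
  have := width_le hKc hKne hr hx hsupp1 hsupp2
  linarith


lemma halfplane {K : Set Pl} (hKc : IsCompact K) (hKconv : Convex ℝ K)
    (hKint : (interior K).Nonempty) {o : Pl} {r : ℝ} (hr : 0 < r)
    (hball : Metric.closedBall o r ⊆ K)
    (hmax : ∀ (ρ : ℝ) (c : Pl), Metric.closedBall c ρ ⊆ K → ρ ≤ r)
    (hw2 : 2 * r < minWidth K) :
    ∀ v : Pl, v ≠ 0 → ∃ P ∈ frontier K ∩ Metric.sphere o r, ⟪P - o, v⟫ < 0 := by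
  classical
  have hKne : K.Nonempty := hKint.mono interior_subset |>.mono (Set.Subset.refl _)
  set S : Set Pl := frontier K ∩ Metric.sphere o r with hSdef
  have hSnorm : ∀ P ∈ S, ‖P - o‖ = r := by
    intro P hP
    have := hP.2
    rwa [Metric.mem_sphere, dist_eq_norm] at this
  have hNA : ∀ x : Pl, ‖x‖ = r → o + x ∈ S → o - x ∈ S → False :=
    no_antipodal hKc hKconv hKint hr hball hw2
  intro v hv
  by_contra hcon
  push_neg at hcon
  -- hcon : ∀ P ∈ S, 0 ≤ ⟪P - o, v⟫
  -- construct a strictly separating direction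
  have hstep : ∃ vstr : Pl, vstr ≠ 0 ∧ ∀ P ∈ S, 0 < ⟪P - o, vstr⟫ := by
    set w : Pl := ‖v‖⁻¹ • rot v with hwdef
    have hwn : ‖w‖ = 1 := by
      rw [hwdef, norm_smul, Real.norm_eq_abs, abs_of_nonneg (by positivity), norm_rot,
        inv_mul_cancel₀ (norm_ne_zero_iff.mpr hv)]
    have hvw : ⟪v, w⟫ = 0 := by
      rw [hwdef, real_inner_smul_right, inner_rot, mul_zero]
    have hperp : ∀ P ∈ S, ⟪P - o, v⟫ = 0 → P - o = r • w ∨ P - o = -(r • w) := by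
      intro P hP hPv
      obtain ⟨c, hc⟩ := perp_decomp hv hPv
      rw [← hwdef] at hc
      have hcn : ‖P - o‖ = |c| := by
        rw [hc, norm_smul, Real.norm_eq_abs, hwn, mul_one]
      rw [hSnorm P hP] at hcn
      rcases abs_cases c with ⟨h1, _⟩ | ⟨h1, _⟩
      · left
        have hcr : c = r := by rw [hcn, h1]
        rw [hc, hcr]
      · right
        have hcr : c = -r := by
          have : r = -c := by rw [hcn, h1]
          linarith
        rw [hc, hcr, neg_smul]
    -- pick w' with o - r • w' not in S
    have hrw_norm : ‖r • w‖ = r := by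
      rw [norm_smul, Real.norm_eq_abs, abs_of_nonneg hr.le, hwn, mul_one]
    have hw' : ∃ w' : Pl, ‖w'‖ = 1 ∧ ⟪w', v⟫ = 0 ∧
        (∀ P ∈ S, ⟪P - o, v⟫ = 0 → P - o = r • w') ∧ o - r • w' ∉ S := by
      have hwv : ⟪w, v⟫ = 0 := by rw [← hvw]; exact real_inner_comm v w
      by_cases hcase : o - r • w ∈ S
      · refine ⟨-w, by rw [norm_neg, hwn], by rw [inner_neg_left, hwv, neg_zero], ?_, ?_⟩
        · intro P hP hPv
          rcases hperp P hP hPv with h1 | h1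
          · exfalso
            have hPS : o + r • w ∈ S := by
              have he : o + r • w = P := by rw [← h1]; abel
              rwa [he]
            exact hNA (r • w) hrw_norm hPS hcase
          · rw [h1, smul_neg]
        · intro hmem
          have h1 : o - r • (-w) = o + r • w := by rw [smul_neg]; abel
          rw [h1] at hmem
          exact hNA (r • w) hrw_norm hmem hcase
      · refine ⟨w, hwn, hwv, ?_, hcase⟩
        intro P hP hPv
        rcases hperp P hP hPv with h1 | h1
        · exact h1
        · exfalso
          apply hcase
          have he : o - r • w = P := by
            rw [sub_eq_iff_eq_add] at h1
            rw [h1]; abel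
          rwa [he]
    obtain ⟨w', hw'n, hw'v, hw'eq, hw'no⟩ := hw'
    -- the compact set C of contact points below level r/2 in direction w'
    set C : Set Pl := S ∩ {P | ⟪P - o, w'⟫ ≤ r/2} with hCdef
    have hSsubK : S ⊆ K := fun P hP => by
      have := hP.1
      rw [hKc.isClosed.frontier_eq] at this
      exact this.1
    have hScl : IsClosed S := isClosed_frontier.inter Metric.isClosed_sphere
    have hSc : IsCompact S := hKc.of_isClosed_subset hScl hSsubK
    have hCc : IsCompact C := hSc.of_isClosed_subset
      (hScl.inter (isClosed_le ((continuous_id.sub continuous_const).inner continuous_const)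
        continuous_const)) Set.inter_subset_left
    by_cases hCne : C.Nonempty
    · -- minimize ⟪P - o, v⟫ on C
      obtain ⟨P0, hP0C, hP0min⟩ := hCc.exists_isMinOn hCne
        ((((continuous_id.sub continuous_const).inner continuous_const)).continuousOn :
          ContinuousOn (fun P : Pl => ⟪P - o, v⟫) C)
      set m : ℝ := ⟪P0 - o, v⟫ with hmdef
      have hm0 : 0 < m := by
        rcases lt_or_eq_of_le (hcon P0 hP0C.1) with h1 | h1
        · exact h1
        · exfalso
          have := hw'eq P0 hP0C.1 h1.symm
          have hcontr := hP0C.2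
          rw [Set.mem_setOf_eq, this, real_inner_smul_left, real_inner_self_eq_norm_sq,
            hw'n] at hcontr
          nlinarith
      set ε : ℝ := m / (2 * r) with hεdef
      have hε : 0 < ε := by positivity
      refine ⟨v + ε • w', ?_, ?_⟩
      · intro h0
        have h1 : ⟪v + ε • w', v⟫ = ‖v‖ ^ 2 := by
          rw [inner_add_left, real_inner_smul_left, hw'v, mul_zero,
            add_zero, real_inner_self_eq_norm_sq]
        rw [h0, inner_zero_left] at h1
        have : 0 < ‖v‖ := norm_pos_iff.mpr hv
        nlinarith
      · intro P hP
        have hPw : -r ≤ ⟪P - o, w'⟫ := by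
          have := abs_real_inner_le_norm (P - o) w'
          rw [hSnorm P hP, hw'n, mul_one] at this
          linarith [(abs_le.mp this).1]
        rw [inner_add_right, real_inner_smul_right]
        by_cases hPC : P ∈ C
        · have h1 : m ≤ ⟪P - o, v⟫ := hP0min hPC
          have h2 : ε * ⟪P - o, w'⟫ ≥ -(ε * r) := by nlinarith
          have h3 : ε * r = m / 2 := by
            rw [hεdef]; field_simp
          nlinarith
        · have h1 : r/2 < ⟪P - o, w'⟫ := by
            by_contra hle
            push_neg at hle
            exact hPC ⟨hP, hle⟩
          have h2 : 0 ≤ ⟪P - o, v⟫ := hcon P hP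
          nlinarith
    · -- C empty : use w' itself
      refine ⟨w', ?_, ?_⟩
      · intro h0
        rw [h0, norm_zero] at hw'n
        norm_num at hw'n
      · intro P hP
        have h1 : ¬(⟪P - o, w'⟫ ≤ r/2) := by
          intro hle
          exact hCne ⟨P, hP, hle⟩
        push_neg at h1
        linarith
  obtain ⟨vstr, hvstr0, hvstr⟩ := hstep
  obtain ⟨c, ρ, hρ, hsub⟩ := exists_bigger hKc hKconv hKne hr.le hball hvstr0 hvstr
  have := hmax ρ c hsub
  linarith

lemma zero_rep {V : Set Pl} (hVc : IsCompact V)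
    (hsep : ∀ v : Pl, v ≠ 0 → ∃ x ∈ V, ⟪x, v⟫ < 0) :
    ∃ (u : Fin 3 → ℝ) (z : Fin 3 → Pl), (∀ i, 0 ≤ u i) ∧ (∑ i, u i = 1) ∧
      (∀ i, z i ∈ V) ∧ ∑ i, u i • z i = 0 := by
  classical
  set A : Set Pl := (fun p : (Fin 3 → ℝ) × (Fin 3 → Pl) => ∑ i, p.1 i • p.2 i) ''
    ((stdSimplex ℝ (Fin 3)) ×ˢ (Set.univ.pi fun _ : Fin 3 => V)) with hAdef
  have hmapc : Continuous (fun p : (Fin 3 → ℝ) × (Fin 3 → Pl) => ∑ i, p.1 i • p.2 i) := by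
    apply continuous_finset_sum
    intro i _
    exact ((continuous_apply i).comp continuous_fst).smul
      ((continuous_apply i).comp continuous_snd)
  have hAc : IsCompact A :=
    ((isCompact_stdSimplex ℝ (Fin 3)).prod (isCompact_univ_pi fun _ => hVc)).image hmapc
  have hhull : convexHull ℝ V ⊆ A := by
    intro y hy
    rw [convexHull_eq_union] at hy
    simp only [Set.mem_iUnion] at hy
    obtain ⟨t, hts, hai, hyt⟩ := hy
    have htne : t.Nonempty := by
      rcases Finset.eq_empty_or_nonempty t with h | h
      · exfalso; rw [h] at hyt; simp at hyt
      · exact h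
    have hcard : t.card ≤ 3 := by
      have h1 : Fintype.card t ≤ Module.finrank ℝ (vectorSpan ℝ (Set.range ((↑) : t → Pl))) + 1 :=
        hai.card_le_finrank_succ
      have h2 : Module.finrank ℝ (vectorSpan ℝ (Set.range ((↑) : t → Pl))) ≤
          Module.finrank ℝ Pl := Submodule.finrank_le _
      have h3 : Module.finrank ℝ Pl = 2 := finrank_euclideanSpace_fin
      rw [Fintype.card_coe] at h1
      omega
    rw [Finset.convexHull_eq] at hyt
    obtain ⟨w, hw0, hw1, hwy⟩ := hyt
    rw [Finset.centerMass_eq_of_sum_1 _ _ hw1] at hwy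
    simp only [id] at hwy
    have hcard1 : 1 ≤ t.card := Finset.card_pos.mpr htne
    have h13 : t.card = 1 ∨ t.card = 2 ∨ t.card = 3 := by omega
    rcases h13 with h | h | h
    · obtain ⟨a, ha⟩ := Finset.card_eq_one.mp h
      rw [ha, Finset.sum_singleton] at hwy hw1
      refine ⟨(![1, 0, 0], fun _ => a), ⟨⟨fun i => by fin_cases i <;> norm_num, by
        simp [Fin.sum_univ_three]⟩, fun i _ => hts (by rw [ha]; simp)⟩, ?_⟩
      simp only [Fin.sum_univ_three]
      rw [← hwy, hw1]
      norm_num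
      exact Or.inl rfl
    · obtain ⟨a, b, hab, ht⟩ := Finset.card_eq_two.mp h
      rw [ht, Finset.sum_pair hab] at hwy hw1
      have haV : a ∈ V := hts (by rw [ht]; simp)
      have hbV : b ∈ V := hts (by rw [ht]; simp)
      have hwa := hw0 a (by rw [ht]; simp)
      have hwb := hw0 b (by rw [ht]; simp)
      refine ⟨(![w a, w b, 0], ![a, b, b]), ⟨⟨fun i => by fin_cases i <;> simpa, by
        simp [Fin.sum_univ_three, hw1]⟩, fun i _ => by fin_cases i <;> simpa⟩, ?_⟩
      simp only [Fin.sum_univ_three]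
      rw [← hwy]
      simp
    · obtain ⟨a, b, c, hab, hac, hbc, ht⟩ := Finset.card_eq_three.mp h
      have hsum3 : ∀ f : Pl → ℝ, True := fun _ => trivial
      have hbm : b ∉ ({c} : Finset Pl) := by simp [hbc]
      have ham : a ∉ ({b, c} : Finset Pl) := by simp [hab, hac]
      rw [ht] at hwy hw1
      rw [show ({a, b, c} : Finset Pl) = insert a (insert b {c}) from rfl,
        Finset.sum_insert ham, Finset.sum_insert hbm, Finset.sum_singleton] at hwy hw1
      have haV : a ∈ V := hts (by rw [ht]; simp)
      have hbV : b ∈ V := hts (by rw [ht]; simp)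
      have hcV : c ∈ V := hts (by rw [ht]; simp)
      have hwa := hw0 a (by rw [ht]; simp)
      have hwb := hw0 b (by rw [ht]; simp)
      have hwc := hw0 c (by rw [ht]; simp)
      refine ⟨(![w a, w b, w c], ![a, b, c]), ⟨⟨fun i => by fin_cases i <;> simpa, by
        simp only [Fin.sum_univ_three, Matrix.cons_val_zero, Matrix.cons_val_one,
          Matrix.head_cons, Matrix.cons_val_two, Matrix.tail_cons]; linarith⟩, fun i _ => by fin_cases i <;> simpa⟩, ?_⟩
      simp only [Fin.sum_univ_three, Matrix.cons_val_zero, Matrix.cons_val_one,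
        Matrix.head_cons, Matrix.cons_val_two, Matrix.tail_cons]
      rw [← hwy]
      abel
  -- 0 is in the closure of the convex hull
  have h0cl : (0 : Pl) ∈ closure (convexHull ℝ V) := by
    by_contra h0
    obtain ⟨f, s, hfD, hfz⟩ := geometric_hahn_banach_closed_point
      ((convex_convexHull ℝ V).closure) isClosed_closure h0
    set φ : Pl := (InnerProductSpace.toDual ℝ Pl).symm f with hφdef
    have hφ : ∀ x : Pl, ⟪φ, x⟫ = f x := fun x => InnerProductSpace.toDual_symm_apply
    have hs0 : s < 0 := by
      have := hfz
      rw [← hφ 0, inner_zero_right] at this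
      linarith
    have hφ0 : φ ≠ 0 := by
      intro h
      obtain ⟨e, he⟩ : ∃ e : Pl, e ≠ 0 := ⟨EuclideanSpace.single 0 1, by
        intro hc
        have := congrFun (congrArg (fun g : Pl => (g : Fin 2 → ℝ)) hc) 0
        simp [EuclideanSpace.single_apply] at this⟩
      obtain ⟨x, hxV, hx⟩ := hsep e he
      have h1 := hfD x (subset_closure (subset_convexHull ℝ V hxV))
      rw [← hφ x, h] at h1
      simp only [inner_zero_left] at h1
      linarith
    obtain ⟨x, hxV, hx⟩ := hsep (-φ) (by simpa using hφ0)
    have h1 := hfD x (subset_closure (subset_convexHull ℝ V hxV))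
    rw [← hφ x] at h1
    rw [inner_neg_right] at hx
    have h2 : 0 < ⟪x, φ⟫ := by linarith
    have h3 : ⟪φ, x⟫ = ⟪x, φ⟫ := real_inner_comm _ _
    linarith
  have h0A : (0 : Pl) ∈ A := by
    have : closure (convexHull ℝ V) ⊆ A := closure_minimal hhull hAc.isClosed
    exact this h0cl
  obtain ⟨⟨u, z⟩, ⟨husimp, hzV⟩, heq⟩ := h0A
  exact ⟨u, z, husimp.1, husimp.2, fun i => hzV i (Set.mem_univ i), heq⟩

/-- Contact points: if `r(K) < ω(K)/2`, the boundary of `K` and of a maximal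
inscribed disk meet in three points forming an acute-angled triangle; in
particular those contact points cannot all lie in a closed half-plane whose
boundary passes through the center of the disk. -/
theorem contact_points (K : Set (EuclideanSpace ℝ (Fin 2)))
    (hKc : IsCompact K) (hKconv : Convex ℝ K) (hKint : (interior K).Nonempty)
    (o : EuclideanSpace ℝ (Fin 2))
    (hball : Metric.closedBall o (inradius K) ⊆ K)
    (hsmall : inradius K < minWidth K / 2) :
    (∃ P₁ P₂ P₃ : EuclideanSpace ℝ (Fin 2),
      P₁ ∈ frontier K ∩ Metric.sphere o (inradius K) ∧
      P₂ ∈ frontier K ∩ Metric.sphere o (inradius K) ∧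
      P₃ ∈ frontier K ∩ Metric.sphere o (inradius K) ∧
      P₁ ≠ P₂ ∧ P₂ ≠ P₃ ∧ P₁ ≠ P₃ ∧
      EuclideanGeometry.angle P₂ P₁ P₃ < Real.pi / 2 ∧
      EuclideanGeometry.angle P₁ P₂ P₃ < Real.pi / 2 ∧
      EuclideanGeometry.angle P₁ P₃ P₂ < Real.pi / 2) ∧
    (∀ v : EuclideanSpace ℝ (Fin 2), v ≠ 0 →
      ∃ P ∈ frontier K ∩ Metric.sphere o (inradius K), (inner ℝ (P - o) v : ℝ) < 0) := by
  classical
  set r : ℝ := inradius K with hrdef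
  -- the set of inscribed radii is bounded above
  obtain ⟨R0, hR0⟩ := hKc.isBounded.subset_closedBall 0
  have hbdd : BddAbove {ρ : ℝ | ∃ c, Metric.closedBall c ρ ⊆ K} := by
    refine ⟨max 0 (2 * R0), ?_⟩
    rintro ρ ⟨c, hc⟩
    rcases le_or_gt ρ 0 with h | h
    · exact le_trans h (le_max_left _ _)
    · have hc1 : c + ρ • (EuclideanSpace.single 0 1 : Pl) ∈ K := by
        apply hc
        rw [Metric.mem_closedBall, dist_eq_norm]
        have he : c + ρ • (EuclideanSpace.single 0 1 : Pl) - c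
            = ρ • (EuclideanSpace.single 0 1 : Pl) := by abel
        rw [he, norm_smul, Real.norm_eq_abs, abs_of_pos h, EuclideanSpace.norm_single]
        simp
      have hc2 : c - ρ • (EuclideanSpace.single 0 1 : Pl) ∈ K := by
        apply hc
        rw [Metric.mem_closedBall, dist_eq_norm]
        have he : c - ρ • (EuclideanSpace.single 0 1 : Pl) - c
            = -(ρ • (EuclideanSpace.single 0 1 : Pl)) := by abel
        rw [he, norm_neg, norm_smul, Real.norm_eq_abs, abs_of_pos h,
          EuclideanSpace.norm_single]
        simp
      have hn1 := hR0 hc1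
      have hn2 := hR0 hc2
      rw [Metric.mem_closedBall, dist_zero_right] at hn1 hn2
      have hsub : (c + ρ • (EuclideanSpace.single 0 1 : Pl))
          - (c - ρ • (EuclideanSpace.single 0 1 : Pl))
          = (2 * ρ) • (EuclideanSpace.single 0 1 : Pl) := by
        rw [two_mul, add_smul]; abel
      have h2ρ : ‖(2 * ρ) • (EuclideanSpace.single 0 1 : Pl)‖ ≤ 2 * R0 := by
        rw [← hsub]
        calc ‖_ - _‖ ≤ _ + _ := norm_sub_le _ _
        _ ≤ 2 * R0 := by linarith
      rw [norm_smul, Real.norm_eq_abs, abs_of_pos (by linarith), EuclideanSpace.norm_single] at h2ρ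
      simp only [norm_one, mul_one] at h2ρ
      exact le_trans (by linarith) (le_max_right _ _)
  have hr : 0 < r := by
    obtain ⟨x0, hx0⟩ := hKint
    obtain ⟨ε, hε, hsubs⟩ := Metric.isOpen_iff.mp isOpen_interior x0 hx0
    have hballK : Metric.closedBall x0 (ε/2) ⊆ K := by
      intro y hy
      apply interior_subset
      apply hsubs
      rw [Metric.mem_closedBall] at hy
      rw [Metric.mem_ball]
      calc dist y x0 ≤ ε/2 := hy
      _ < ε := by linarith
    have : ε/2 ≤ r := le_csSup hbdd ⟨x0, hballK⟩
    linarith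
  have hmax : ∀ (ρ : ℝ) (c : Pl), Metric.closedBall c ρ ⊆ K → ρ ≤ r :=
    fun ρ c h => le_csSup hbdd ⟨c, h⟩
  have hw2 : 2 * r < minWidth K := by rw [hrdef]; linarith
  have hhalf := halfplane hKc hKconv hKint hr hball hmax hw2
  refine ⟨?_, hhalf⟩
  -- the acute triangle
  set S : Set Pl := frontier K ∩ Metric.sphere o r with hSdef
  have hSsubK : S ⊆ K := fun P hP => by
    have := hP.1
    rw [hKc.isClosed.frontier_eq] at this
    exact this.1
  have hScl : IsClosed S := isClosed_frontier.inter Metric.isClosed_sphere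
  have hSc : IsCompact S := hKc.of_isClosed_subset hScl hSsubK
  set V : Set Pl := (fun P => P - o) '' S with hVdef
  have hVc : IsCompact V := hSc.image (continuous_id.sub continuous_const)
  have hsep : ∀ v : Pl, v ≠ 0 → ∃ x ∈ V, ⟪x, v⟫ < 0 := by
    intro v hv
    obtain ⟨P, hPS, hPv⟩ := hhalf v hv
    exact ⟨P - o, ⟨P, hPS, rfl⟩, hPv⟩
  obtain ⟨u, z, hu0, hu1, hzV, hzsum⟩ := zero_rep hVc hsep
  have hzS : ∀ i, o + z i ∈ S := by
    intro i
    obtain ⟨P, hPS, hPz⟩ := hzV i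
    have : P = o + z i := by
      rw [sub_eq_iff_eq_add'] at hPz
      exact hPz
    rwa [← this]
  have hzn : ∀ i, ‖z i‖ = r := by
    intro i
    have := (hzS i).2
    rw [Metric.mem_sphere, dist_eq_norm] at this
    have he : o + z i - o = z i := by abel
    rwa [he] at this
  have hNA : ∀ i j : Fin 3, z i = -(z j) → False := by
    intro i j hij
    have h1 : o - z j ∈ S := by
      have : o - z j = o + z i := by rw [hij]; abel
      rw [this]
      exact hzS i
    exact no_antipodal hKc hKconv hKint hr hball hw2 (z j) (hzn j) (hzS j) h1
  have htwo : ∀ (i j : Fin 3) (a b : ℝ), 0 ≤ a → 0 ≤ b → a + b = 1 →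
      a • z i + b • z j = 0 → False := by
    intro i j a b ha hb hab h
    exact hNA j i (two_point hr (hzn i) (hzn j) ha hb hab h)
  have hsum3 : u 0 • z 0 + u 1 • z 1 + u 2 • z 2 = 0 := by
    have := hzsum
    rwa [Fin.sum_univ_three] at this
  have husum : u 0 + u 1 + u 2 = 1 := by
    have := hu1
    rwa [Fin.sum_univ_three] at this
  by_cases h0 : u 0 = 0
  · exfalso
    apply htwo 1 2 (u 1) (u 2) (hu0 1) (hu0 2) (by linarith)
    rw [h0, zero_smul, zero_add] at hsum3
    exact hsum3
  by_cases h1 : u 1 = 0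
  · exfalso
    apply htwo 0 2 (u 0) (u 2) (hu0 0) (hu0 2) (by linarith)
    rw [h1, zero_smul, add_zero] at hsum3
    exact hsum3
  by_cases h2 : u 2 = 0
  · exfalso
    apply htwo 0 1 (u 0) (u 1) (hu0 0) (hu0 1) (by linarith)
    rw [h2, zero_smul, add_zero] at hsum3
    exact hsum3
  have hp0 : 0 < u 0 := lt_of_le_of_ne (hu0 0) (Ne.symm h0)
  have hp1 : 0 < u 1 := lt_of_le_of_ne (hu0 1) (Ne.symm h1)
  have hp2 : 0 < u 2 := lt_of_le_of_ne (hu0 2) (Ne.symm h2)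
  by_cases hz01 : z 0 = z 1
  · exfalso
    apply htwo 0 2 (u 0 + u 1) (u 2) (by linarith) (hu0 2) (by linarith)
    rw [add_smul]
    rw [← hsum3, hz01]
  by_cases hz12 : z 1 = z 2
  · exfalso
    apply htwo 0 1 (u 0) (u 1 + u 2) (hu0 0) (by linarith) (by linarith)
    rw [add_smul]
    rw [← hsum3, hz12]
    abel
  by_cases hz02 : z 0 = z 2
  · exfalso
    apply htwo 1 0 (u 1) (u 0 + u 2) (hu0 1) (by linarith) (by linarith)
    rw [add_smul]
    rw [← hsum3, hz02]
    abel
  have hna01 : z 0 + z 1 ≠ 0 := fun h => hNA 0 1 (eq_neg_of_add_eq_zero_left h)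
  have hna12 : z 1 + z 2 ≠ 0 := fun h => hNA 1 2 (eq_neg_of_add_eq_zero_left h)
  have hna02 : z 0 + z 2 ≠ 0 := fun h => hNA 0 2 (eq_neg_of_add_eq_zero_left h)
  have A1 : 0 < ⟪z 1 - z 0, z 2 - z 0⟫ :=
    acute_aux (hzn 0) (hzn 1) (hzn 2) hp0 hp1 hp2 hsum3 hna12
  have A2 : 0 < ⟪z 0 - z 1, z 2 - z 1⟫ :=
    acute_aux (hzn 1) (hzn 0) (hzn 2) hp1 hp0 hp2
      ((by abel : u 1 • z 1 + u 0 • z 0 + u 2 • z 2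
        = u 0 • z 0 + u 1 • z 1 + u 2 • z 2).trans hsum3) hna02
  have A3 : 0 < ⟪z 0 - z 2, z 1 - z 2⟫ :=
    acute_aux (hzn 2) (hzn 0) (hzn 1) hp2 hp0 hp1
      ((by abel : u 2 • z 2 + u 0 • z 0 + u 1 • z 1
        = u 0 • z 0 + u 1 • z 1 + u 2 • z 2).trans hsum3) hna01
  have hangle : ∀ a b c : Pl, b ≠ a → c ≠ a → 0 < ⟪b - a, c - a⟫ →
      EuclideanGeometry.angle (o + b) (o + a) (o + c) < Real.pi / 2 := by
    intro a b c hba hca hpos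
    have he : EuclideanGeometry.angle (o + b) (o + a) (o + c)
        = InnerProductGeometry.angle (b - a) (c - a) := by
      unfold EuclideanGeometry.angle
      have e1 : (o + b) -ᵥ (o + a) = b - a := by
        rw [vsub_eq_sub]; abel
      have e2 : (o + c) -ᵥ (o + a) = c - a := by
        rw [vsub_eq_sub]; abel
      rw [e1, e2]
    rw [he]
    unfold InnerProductGeometry.angle
    apply Real.arccos_lt_pi_div_two.mpr
    apply div_pos hpos
    exact mul_pos (norm_pos_iff.mpr (sub_ne_zero_of_ne hba))
      (norm_pos_iff.mpr (sub_ne_zero_of_ne hca))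
  refine ⟨o + z 0, o + z 1, o + z 2, hzS 0, hzS 1, hzS 2, ?_, ?_, ?_, ?_, ?_, ?_⟩
  · intro h
    exact hz01 (add_left_cancel h)
  · intro h
    exact hz12 (add_left_cancel h)
  · intro h
    exact hz02 (add_left_cancel h)
  · exact hangle (z 0) (z 1) (z 2) (fun h => hz01 h.symm) (fun h => hz02 h.symm) A1
  · exact hangle (z 1) (z 0) (z 2) hz01 (fun h => hz12 h.symm) A2
  · exact hangle (z 2) (z 0) (z 1) hz02 hz12 A3
end

section
/- Let T be a triangle with smallest interior angle γ_T and minimal width ω(T). Let E be an equilateral triangle of width ω(E) ≤ ω(T), positioned so that its height is aligned with the minimal-width height of T and its corresponding base lies on the longest side of T. Then the Hausdorff distance satisfies d_H(T, E) ≤ (√3 / tan γ_T)·ω(T) − ω(E). -/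
open Metric Set MeasureTheory Pointwise

/-!
Since `tan γ_T = h / c`, the bound reads `√3 c − ω`. Send the apex of `T` to the apex of `E`
and the endpoints of the longest side to the endpoints of the base of `E`: each vertex moves
by at most `√3 c − ω` (this is where `b ≤ c` and the longest-side condition
`h² ≤ b² + 2bc` enter), and taking convex hulls does not increase the Hausdorff distance.
-/

section ConvexHull

variable {E : Type*} [SeminormedAddCommGroup E] [NormedSpace ℝ E]

theorem convexHull_subset_cthickening_convexHull {s t : Set E} {r : ℝ}
    (h : s ⊆ cthickening r t) : convexHull ℝ s ⊆ cthickening r (convexHull ℝ t) :=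
  convexHull_min (h.trans (cthickening_subset_of_subset r (subset_convexHull ℝ t)))
    ((convex_convexHull ℝ t).cthickening r)

theorem hausdorffEDist_convexHull_le (s t : Set E) :
    hausdorffEDist (convexHull ℝ s) (convexHull ℝ t) ≤ hausdorffEDist s t := by
  rcases eq_top_or_lt_top (hausdorffEDist s t) with htop | hfin
  · exact htop ▸ le_top
  set r := (hausdorffEDist s t).toReal
  have hr : hausdorffEDist s t = ENNReal.ofReal r := (ENNReal.ofReal_toReal hfin.ne).symm
  have hull_subset {s t : Set E} (hst : hausdorffEDist s t = ENNReal.ofReal r) :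
      convexHull ℝ s ⊆ cthickening r (convexHull ℝ t) :=
    convexHull_subset_cthickening_convexHull fun x hx =>
      mem_cthickening_iff.2 (hst ▸ infEDist_le_hausdorffEDist_of_mem hx)
  rw [hr]
  refine hausdorffEDist_le_of_infEDist (fun x hx => ?_) (fun x hx => ?_)
  · exact mem_cthickening_iff.1 (hull_subset hr hx)
  · exact mem_cthickening_iff.1 (hull_subset (hausdorffEDist_comm.trans hr) hx)

theorem hausdorffDist_convexHull_le {s t : Set E} (hst : hausdorffEDist s t ≠ ⊤) :
    hausdorffDist (convexHull ℝ s) (convexHull ℝ t) ≤ hausdorffDist s t :=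
  ENNReal.toReal_mono hst (hausdorffEDist_convexHull_le s t)

end ConvexHull

theorem hausdorffDist_triple_le {X : Type*} [PseudoMetricSpace X] {a b c a' b' c' : X} {r : ℝ}
    (ha : dist a a' ≤ r) (hb : dist b b' ≤ r) (hc : dist c c' ≤ r) :
    hausdorffDist {a, b, c} {a', b', c'} ≤ r := by
  refine hausdorffDist_le_of_mem_dist (dist_nonneg.trans ha) ?_ ?_
  · rintro x (rfl | rfl | rfl)
    exacts [⟨a', by simp, ha⟩, ⟨b', by simp, hb⟩, ⟨c', by simp, hc⟩]
  · rintro x (rfl | rfl | rfl)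
    exacts [⟨a, by simp, dist_comm a x ▸ ha⟩, ⟨b, by simp, dist_comm b x ▸ hb⟩,
      ⟨c, by simp, dist_comm c x ▸ hc⟩]

theorem pt_sub_pt (x y x' y' : ℝ) : pt x y - pt x' y' = pt (x - x') (y - y') := by
  ext i; fin_cases i <;> simp [pt]

theorem smul_pt (r x y : ℝ) : r • pt x y = pt (r * x) (r * y) := by
  ext i; fin_cases i <;> simp [pt]

theorem inner_pt_pt (x y x' y' : ℝ) :
    (inner ℝ (pt x y) (pt x' y') : ℝ) = x * x' + y * y' := by
  simp [pt, PiLp.inner_apply, Fin.sum_univ_two]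
  ring

theorem dist_pt_pt (x y x' y' : ℝ) :
    dist (pt x y) (pt x' y') = √((x - x') ^ 2 + (y - y') ^ 2) := by
  simp [EuclideanSpace.dist_eq, pt, Fin.sum_univ_two, Real.dist_eq, sq_abs]

open EuclideanGeometry in
theorem tan_angle_pt {b c : ℝ} (h : ℝ) (hbc : 0 < b + c) (hc : 0 < c) :
    Real.tan (∠ (pt 0 h) (pt c 0) (pt (-b) 0)) = |h| / c := by
  have hfoot : ∠ (pt 0 h) (pt c 0) (pt (-b) 0) = ∠ (pt 0 h) (pt c 0) (pt 0 0) := by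
    refine angle_smul_right_of_pos _ (r := (b + c) / c) (by positivity) ?_
    simp only [vsub_eq_sub, pt_sub_pt, smul_pt]
    congr 1 <;> field_simp <;> ring
  have hright : ∠ (pt 0 h) (pt 0 0) (pt c 0) = Real.pi / 2 := by
    rw [angle, ← InnerProductGeometry.inner_eq_zero_iff_angle_eq_pi_div_two]
    simp [vsub_eq_sub, pt_sub_pt, inner_pt_pt]
  rw [hfoot, angle_comm, tan_angle_of_angle_eq_pi_div_two hright, dist_pt_pt, dist_pt_pt]
  simp [Real.sqrt_sq_eq_abs, abs_of_pos hc]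

theorem le_sqrt_three_mul_of_sq_le {b c h : ℝ} (hb : 0 ≤ b) (hbc : b ≤ c)
    (hh : h ^ 2 ≤ b ^ 2 + 2 * b * c) :
    h ≤ √3 * c := by
  have hc : 0 ≤ c := hb.trans hbc
  have h3 : (√3 * c) ^ 2 = 3 * c ^ 2 := by rw [mul_pow, Real.sq_sqrt zero_le_three]
  refine le_of_sq_le_sq ?_ (by positivity)
  nlinarith

theorem one_add_sqrt_three_mul_le_of_sq_le {b c h : ℝ} (hb : 0 ≤ b) (hbc : b ≤ c)
    (hh : h ^ 2 ≤ b ^ 2 + 2 * b * c) : (1 + √3) * h ≤ 3 * c + √3 * b := by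
  have hc : 0 ≤ c := hb.trans hbc
  have h3 : √3 ^ 2 = 3 := Real.sq_sqrt zero_le_three
  refine le_of_sq_le_sq ?_ (by positivity)
  nlinarith [mul_nonneg (sub_nonneg.2 hbc) (by positivity : 0 ≤ 9 * c + (1 + 2 * √3) * b),
    mul_le_mul_of_nonneg_left hh (by positivity : (0:ℝ) ≤ (1 + √3) ^ 2)]

/-- The triangle `T` has vertices `(0,h)`, `(−b,0)`, `(c,0)`, its longest side on the `x`-axis, so
`ω(T) = h` and `γ_T` is the angle at `(c,0)`; `E` has vertices `(0,ω)`, `(±ω/√3, 0)`. -/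
theorem hausdorffDist_triangle_equilateral_general
    (b c h ω : ℝ) (hb : 0 < b) (hbc : b ≤ c) (hh : 0 < h)
    (hlongest : Real.sqrt (c ^ 2 + h ^ 2) ≤ b + c)
    (hωh : ω ≤ h) :
    Metric.hausdorffDist
        (convexHull ℝ {pt 0 h, pt (-b) 0, pt c 0})
        (convexHull ℝ {pt 0 ω, pt (-(ω / Real.sqrt 3)) 0, pt (ω / Real.sqrt 3) 0})
      ≤ Real.sqrt 3 / Real.tan (EuclideanGeometry.angle (pt 0 h) (pt c 0) (pt (-b) 0)) * h
        - ω := by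
  have hc : 0 < c := hb.trans_le hbc
  have hsq : h ^ 2 ≤ b ^ 2 + 2 * b * c := by
    nlinarith [(Real.sqrt_le_left (by positivity)).1 hlongest]
  rw [tan_angle_pt h (by positivity) hc, abs_of_pos hh, div_div_eq_mul_div,
    div_mul_cancel₀ _ hh.ne']
  have hs : 0 < √3 := by positivity
  obtain ⟨u, rfl⟩ : ∃ u, ω = √3 * u := ⟨ω / √3, by field_simp⟩
  have hhc := le_sqrt_three_mul_of_sq_le hb.le hbc hsq
  have huc : u ≤ c := le_of_mul_le_mul_left (hωh.trans hhc) hs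
  have hs1 : 1 ≤ √3 := Real.one_le_sqrt.2 (by norm_num)
  rw [mul_div_cancel_left₀ u hs.ne', ← mul_sub]
  refine (hausdorffDist_convexHull_le (hausdorffEDist_ne_top_of_nonempty_of_bounded
    (by simp) (by simp) (toFinite _).isBounded (toFinite _).isBounded)).trans
    (hausdorffDist_triple_le ?_ ?_ ?_)
  all_goals simp only [dist_pt_pt, sub_self, ne_eq, OfNat.ofNat_ne_zero, not_false_eq_true,
    zero_pow, add_zero, zero_add, Real.sqrt_sq_eq_abs]
  · rw [abs_of_nonneg (by linarith)]
    nlinarith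
  · refine abs_le.2 ⟨by nlinarith, ?_⟩
    have hs3 : √3 * √3 = 3 := Real.mul_self_sqrt zero_le_three
    nlinarith [one_add_sqrt_three_mul_le_of_sq_le hb.le hbc hsq,
      mul_le_mul_of_nonneg_left hωh (by positivity : 0 ≤ 1 + √3)]
  · rw [abs_of_nonneg (by linarith)]
    nlinarith

/-- Hausdorff distance from a triangle to a suitably placed equilateral triangle.
The triangle `T` has vertices `V₁ = (0,h)`, `V₂ = (−b,0)`, `V₃ = (c,0)` with
`0 < b ≤ c` and the side `V₂V₃` longest (so its minimal width is `h` and its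
smallest interior angle `γ_T` is at `V₃`); the equilateral triangle `E` of width
`ω ≤ h` has vertices `(0,ω)`, `(±ω/√3, 0)`, so that its height is aligned with
the minimal-width height of `T` and its base lies on the longest side of `T`. -/
theorem hausdorffDist_triangle_equilateral
    (b c h ω : ℝ) (hb : 0 < b) (hbc : b ≤ c) (hh : 0 < h)
    (hlongest : Real.sqrt (c ^ 2 + h ^ 2) ≤ b + c)
    (hω : 0 < ω) (hωh : ω ≤ h) :
    Metric.hausdorffDist
        (convexHull ℝ {pt 0 h, pt (-b) 0, pt c 0})
        (convexHull ℝ {pt 0 ω, pt (-(ω / Real.sqrt 3)) 0, pt (ω / Real.sqrt 3) 0})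
      ≤ Real.sqrt 3 / Real.tan (EuclideanGeometry.angle (pt 0 h) (pt c 0) (pt (-b) 0)) * h
        - ω :=
  hausdorffDist_triangle_equilateral_general b c h ω hb hbc hh hlongest hωh
end

section
/- Let K be a planar convex body with r(K) < ω(K)/2 and let T be the triangle circumscribed to K determined by the tangent lines to the indisk at the three contact points, with side lengths s₁ ≥ s₂ ≥ s₃. Then d_H(K, T) ≤ (s₁ − s₃) + s₃·(ω(T) − ω(K))/ω(T). -/
open Metric Set MeasureTheory Pointwise

section Helpers

local notation "Pl" => EuclideanSpace ℝ (Fin 2)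

private lemma inner_formula (x y : Pl) : (inner ℝ x y : ℝ) = x 0 * y 0 + x 1 * y 1 := by
  simp [PiLp.inner_apply, Fin.sum_univ_two]
  ring

private lemma norm_sq_formula (x : Pl) : ‖x‖ ^ 2 = x 0 ^ 2 + x 1 ^ 2 := by
  rw [← real_inner_self_eq_norm_sq, inner_formula]; ring

instance : Nonempty (Metric.sphere (0 : Pl) 1) := by
  refine ⟨⟨pt 1 0, ?_⟩⟩
  rw [mem_sphere_zero_iff_norm]
  have h := norm_sq_formula (pt 1 0)
  have h0 : pt 1 0 0 = 1 := rfl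
  have h1 : pt 1 0 1 = 0 := rfl
  nlinarith [norm_nonneg (pt 1 0)]

private lemma bddAbove_proj (K : Set Pl) (hKc : IsCompact K) (θ : Pl) :
    BddAbove ((fun x => (inner ℝ x θ : ℝ)) '' K) :=
  (hKc.image (continuous_id.inner continuous_const)).bddAbove

private lemma bddBelow_proj (K : Set Pl) (hKc : IsCompact K) (θ : Pl) :
    BddBelow ((fun x => (inner ℝ x θ : ℝ)) '' K) :=
  (hKc.image (continuous_id.inner continuous_const)).bddBelow

private lemma width_nonneg (K : Set Pl) (hKc : IsCompact K) (hne : K.Nonempty) (θ : Pl) :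
    0 ≤ sSup ((fun x => (inner ℝ x θ : ℝ)) '' K) - sInf ((fun x => (inner ℝ x θ : ℝ)) '' K) := by
  obtain ⟨x, hx⟩ := hne
  have h1 : (inner ℝ x θ : ℝ) ≤ sSup _ := le_csSup (bddAbove_proj K hKc θ) (mem_image_of_mem _ hx)
  have h2 : sInf _ ≤ (inner ℝ x θ : ℝ) := csInf_le (bddBelow_proj K hKc θ) (mem_image_of_mem _ hx)
  linarith

private lemma minWidth_le_width (K : Set Pl) (hKc : IsCompact K) (hne : K.Nonempty)
    (θ : Metric.sphere (0 : Pl) 1) :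
    minWidth K ≤ sSup ((fun x => (inner ℝ x θ.1 : ℝ)) '' K)
      - sInf ((fun x => (inner ℝ x θ.1 : ℝ)) '' K) := by
  apply ciInf_le
  refine ⟨0, ?_⟩
  rintro y ⟨θ', rfl⟩
  exact width_nonneg K hKc hne θ'.1

private lemma le_minWidth (K : Set Pl) {c : ℝ}
    (h : ∀ θ : Metric.sphere (0 : Pl) 1,
      c ≤ sSup ((fun x => (inner ℝ x θ.1 : ℝ)) '' K) - sInf ((fun x => (inner ℝ x θ.1 : ℝ)) '' K)) :
    c ≤ minWidth K := le_ciInf h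

private lemma minWidth_nonneg' (K : Set Pl) (hKc : IsCompact K) (hne : K.Nonempty) :
    0 ≤ minWidth K :=
  le_minWidth K fun θ => width_nonneg K hKc hne θ.1

private lemma minWidth_mono (K T : Set Pl) (hKc : IsCompact K) (hKne : K.Nonempty)
    (hTc : IsCompact T) (hKT : K ⊆ T) : minWidth K ≤ minWidth T := by
  apply le_minWidth
  intro θ
  refine le_trans (minWidth_le_width K hKc hKne θ) ?_
  have h1 : sSup ((fun x => (inner ℝ x θ.1 : ℝ)) '' K)
      ≤ sSup ((fun x => (inner ℝ x θ.1 : ℝ)) '' T) :=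
    csSup_le_csSup (bddAbove_proj T hTc θ.1) (hKne.image _) (image_mono hKT)
  have h2 : sInf ((fun x => (inner ℝ x θ.1 : ℝ)) '' T)
      ≤ sInf ((fun x => (inner ℝ x θ.1 : ℝ)) '' K) :=
    csInf_le_csInf (bddBelow_proj T hTc θ.1) (hKne.image _) (image_mono hKT)
  linarith

private lemma mem_tri {v u w x : Pl} (hx : x ∈ convexHull ℝ ({v, u, w} : Set Pl)) :
    ∃ a b c : ℝ, 0 ≤ a ∧ 0 ≤ b ∧ 0 ≤ c ∧ a + b + c = 1 ∧ x = a • v + b • u + c • w := by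
  rw [convexHull_insert (insert_nonempty u {w}), convexHull_pair, mem_convexJoin] at hx
  obtain ⟨p, hp, z, hz, hxz⟩ := hx
  rw [mem_singleton_iff] at hp
  subst hp
  obtain ⟨b, c, hb, hc, hbc, hzeq⟩ := hz
  obtain ⟨a, t, ha, ht, hat, hxeq⟩ := hxz
  refine ⟨a, t * b, t * c, ha, mul_nonneg ht hb, mul_nonneg ht hc, by nlinarith, ?_⟩
  rw [← hxeq, ← hzeq]
  module

private lemma combo_mem {s : Set Pl} (hs : Convex ℝ s) {x y z : Pl} (hx : x ∈ s) (hy : y ∈ s)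
    (hz : z ∈ s) {a b c : ℝ} (ha : 0 ≤ a) (hb : 0 ≤ b) (hc : 0 ≤ c) (habc : a + b + c = 1) :
    a • x + b • y + c • z ∈ s := by
  rcases eq_or_lt_of_le (add_nonneg hb hc) with h | h
  · have hb0 : b = 0 := by linarith
    have hc0 : c = 0 := by linarith
    have ha1 : a = 1 := by linarith
    simpa [hb0, hc0, ha1] using hx
  · have key : a • x + (b + c) • ((b / (b + c)) • y + (c / (b + c)) • z) ∈ s :=
      hs hx (hs hy hz (div_nonneg hb h.le) (div_nonneg hc h.le) (by field_simp)) ha h.le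
        (by linarith)
    convert key using 1
    rw [smul_add, smul_smul, smul_smul, mul_div_cancel₀ _ (ne_of_gt h),
      mul_div_cancel₀ _ (ne_of_gt h)]
    abel

private lemma det_ne (A B C : Pl) (hnc : ¬ Collinear ℝ ({A, B, C} : Set Pl)) :
    (B 0 - A 0) * (C 1 - A 1) - (B 1 - A 1) * (C 0 - A 0) ≠ 0 := by
  intro h
  apply hnc
  rw [collinear_iff_of_mem (mem_insert A {B, C})]
  by_cases hBA : B = A
  · subst hBA
    refine ⟨C - B, fun p hp => ?_⟩
    simp only [mem_insert_iff, mem_singleton_iff] at hp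
    rcases hp with h1 | h1 | h1 <;> subst h1
    · exact ⟨0, by simp⟩
    · exact ⟨0, by simp⟩
    · exact ⟨1, by simp⟩
  · refine ⟨B - A, fun p hp => ?_⟩
    simp only [mem_insert_iff, mem_singleton_iff] at hp
    have hv : B - A ≠ 0 := sub_ne_zero.2 hBA
    have hcomp : B 0 - A 0 ≠ 0 ∨ B 1 - A 1 ≠ 0 := by
      by_contra hcon
      push_neg at hcon
      apply hv
      ext i
      fin_cases i <;> simp [sub_eq_zero] <;>
        [exact sub_eq_zero.1 hcon.1; exact sub_eq_zero.1 hcon.2]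
    rcases hp with h1 | h1 | h1 <;> subst h1
    · exact ⟨0, by simp⟩
    · exact ⟨1, by ext i; fin_cases i <;> simp [sub_eq_zero]⟩
    · rcases hcomp with hc0 | hc1
      · refine ⟨(p 0 - A 0) / (B 0 - A 0), ?_⟩
        ext i
        fin_cases i <;>
          simp only [vadd_eq_add, PiLp.add_apply, PiLp.smul_apply, PiLp.sub_apply, smul_eq_mul, Fin.zero_eta, Fin.mk_one]
        · field_simp
          ring
        · field_simp
          nlinarith [h]
      · refine ⟨(p 1 - A 1) / (B 1 - A 1), ?_⟩
        ext i
        fin_cases i <;>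
          simp only [vadd_eq_add, PiLp.add_apply, PiLp.smul_apply, PiLp.sub_apply, smul_eq_mul, Fin.zero_eta, Fin.mk_one]
        · field_simp
          nlinarith [h]
        · field_simp
          ring

private lemma boxD_pos (p q p' q' W L : ℝ) (hp : 0 ≤ p) (hq : 0 ≤ q)
    (h1 : |p| ≤ W) (h2 : |q| ≤ W) (h3 : |p - q| ≤ W)
    (h4 : |p'| ≤ L) (h5 : |q'| ≤ L) (h6 : |p' - q'| ≤ L) :
    p * q' - q * p' ≤ W * L := by
  have hW : 0 ≤ W := le_trans (abs_nonneg p) h1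
  have hL : 0 ≤ L := le_trans (abs_nonneg p') h4
  rw [abs_le] at *
  rcases le_total 0 p' with hp' | hp'
  · rcases le_total 0 (q' - p') with hx | hx
    · nlinarith [mul_nonneg (sub_nonneg.2 h1.2) hx,
        mul_nonneg (sub_nonneg.2 h3.2) hp', mul_nonneg hW (sub_nonneg.2 h5.2)]
    · nlinarith [mul_nonneg hp (neg_nonneg.2 hx),
        mul_nonneg (sub_nonneg.2 h3.2) hp', mul_nonneg hW (sub_nonneg.2 h4.2)]
  · rcases le_total 0 q' with hq' | hq'
    · nlinarith [mul_nonneg (sub_nonneg.2 h1.2) hq',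
        mul_nonneg (sub_nonneg.2 h2.2) (neg_nonneg.2 hp'),
        mul_nonneg hW (sub_nonneg.2 (neg_le.1 h6.1))]
    · nlinarith [mul_nonneg hp (neg_nonneg.2 hq'),
        mul_nonneg (sub_nonneg.2 h2.2) (neg_nonneg.2 hp'),
        mul_nonneg hW (add_nonneg hL (neg_nonneg.2 hp'))]

private lemma boxD (p q p' q' W L : ℝ)
    (h1 : |p| ≤ W) (h2 : |q| ≤ W) (h3 : |p - q| ≤ W)
    (h4 : |p'| ≤ L) (h5 : |q'| ≤ L) (h6 : |p' - q'| ≤ L) :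
    p * q' - q * p' ≤ W * L := by
  have hW : 0 ≤ W := le_trans (abs_nonneg p) h1
  have hL : 0 ≤ L := le_trans (abs_nonneg p') h4
  rcases le_total 0 p with hp | hp <;> rcases le_total 0 q with hq | hq
  · exact boxD_pos p q p' q' W L hp hq h1 h2 h3 h4 h5 h6
  · rw [abs_le] at *
    nlinarith [mul_nonneg hp (sub_nonneg.2 h5.2),
      mul_nonneg (neg_nonneg.2 hq) (sub_nonneg.2 h4.2),
      mul_nonneg (sub_nonneg.2 h3.2) hL]
  · rw [abs_le] at *
    nlinarith [mul_nonneg (neg_nonneg.2 hp) (sub_nonneg.2 (neg_le.1 h5.1)),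
      mul_nonneg hq (sub_nonneg.2 (neg_le.1 h4.1)),
      mul_nonneg (sub_nonneg.2 (neg_le.1 h3.1)) hL]
  · have := boxD_pos (-q) (-p) q' p' W L (neg_nonneg.2 hq) (neg_nonneg.2 hp)
      (by rwa [abs_neg]) (by rwa [abs_neg])
      (by rw [show -q - -p = -(q - p) by ring, abs_neg, abs_sub_comm]; exact h3)
      h5 h4 (by rwa [abs_sub_comm])
    linarith [this]

private lemma box (p q p' q' W L : ℝ)
    (h1 : |p| ≤ W) (h2 : |q| ≤ W) (h3 : |p - q| ≤ W)
    (h4 : |p'| ≤ L) (h5 : |q'| ≤ L) (h6 : |p' - q'| ≤ L) :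
    |p * q' - q * p'| ≤ W * L := by
  rw [abs_le]
  constructor
  · have := boxD q p q' p' W L h2 h1 (by rwa [abs_sub_comm]) h5 h4 (by rwa [abs_sub_comm])
    linarith
  · exact boxD p q p' q' W L h1 h2 h3 h4 h5 h6

private lemma vertex_est (K : Set Pl) (hKc : IsCompact K) (hne : K.Nonempty) (v u w : Pl)
    (hKT : K ⊆ convexHull ℝ ({v, u, w} : Set Pl))
    (hδ : (w 0 - u 0) * (v 1 - u 1) - (w 1 - u 1) * (v 0 - u 0) ≠ 0)
    (M : ℝ) (hM1 : dist v u ≤ M) (hM2 : dist v w ≤ M) :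
    Metric.infDist v K ≤
      (1 - minWidth K * dist u w /
        |(w 0 - u 0) * (v 1 - u 1) - (w 1 - u 1) * (v 0 - u 0)|) * M := by
  set δ : ℝ := (w 0 - u 0) * (v 1 - u 1) - (w 1 - u 1) * (v 0 - u 0) with hδdef
  set Δ : ℝ := |δ| with hΔdef
  have hΔ : 0 < Δ := abs_pos.2 hδ
  have hM0 : 0 ≤ M := le_trans dist_nonneg hM1
  have huw : u ≠ w := by
    intro h; apply hδ; rw [hδdef, h]; ring
  have hD2 : 0 < dist u w := dist_pos.2 huw
  set D2 := dist u w with hD2def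
  have hD2norm : D2 = ‖w - u‖ := by rw [hD2def, dist_eq_norm, norm_sub_rev]
  set e : ℝ := if 0 ≤ δ then 1 else -1 with hedef
  have he : e * δ = Δ := by
    rw [hΔdef, hedef]
    split_ifs with h
    · rw [one_mul, abs_of_nonneg h]
    · push_neg at h; rw [abs_of_neg h]; ring
  have he1 : |e| = 1 := by rw [hedef]; split_ifs <;> simp
  set m : Pl := pt (-((w - u) 1)) ((w - u) 0) with hmdef
  have hm0 : m 0 = -(w 1 - u 1) := rfl
  have hm1 : m 1 = w 0 - u 0 := rfl
  have hmnorm : ‖m‖ = ‖w - u‖ := by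
    refine (sq_eq_sq₀ (norm_nonneg m) (norm_nonneg _)).1 ?_
    rw [norm_sq_formula, norm_sq_formula, hm0, hm1]
    have hwu0 : (w - u) 0 = w 0 - u 0 := rfl
    have hwu1 : (w - u) 1 = w 1 - u 1 := rfl
    rw [hwu0, hwu1]; ring
  set n : Pl := (e / D2) • m with hndef
  have hn : ‖n‖ = 1 := by
    rw [hndef, norm_smul, Real.norm_eq_abs, abs_div, he1, hmnorm, ← hD2norm,
      abs_of_pos hD2]
    field_simp
  set f : Pl → ℝ := fun x => (inner ℝ x n : ℝ) with hfdef
  have hfx : ∀ x : Pl, f x = (e / D2) * (x 0 * (-(w 1 - u 1)) + x 1 * (w 0 - u 0)) := by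
    intro x
    rw [hfdef]
    simp only [hndef, real_inner_smul_right, inner_formula, hm0, hm1]
  have hgw : f w - f u = 0 := by rw [hfx w, hfx u]; ring
  have hgv : f v - f u = Δ / D2 := by
    rw [hfx v, hfx u, ← he, hδdef]
    field_simp
    ring
  have hfaff : ∀ (x y : Pl) (a b : ℝ), f (a • x + b • y) = a * f x + b * f y := by
    intro x y a b
    rw [hfdef]
    simp only [inner_add_left, real_inner_smul_left]
  have hT0 : ∀ x ∈ convexHull ℝ ({v, u, w} : Set Pl), f u ≤ f x := by
    have hconvS : Convex ℝ {x : Pl | f u ≤ f x} := by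
      intro x hx y hy a b ha hb hab
      simp only [mem_setOf_eq] at hx hy ⊢
      rw [hfaff]
      have h0 : f u = a * f u + b * f u := by rw [← add_mul, hab, one_mul]
      have h1 := mul_le_mul_of_nonneg_left hx ha
      have h2 := mul_le_mul_of_nonneg_left hy hb
      linarith
    have hsub : ({v, u, w} : Set Pl) ⊆ {x : Pl | f u ≤ f x} := by
      rintro p hp
      simp only [mem_insert_iff, mem_singleton_iff] at hp
      rcases hp with rfl | rfl | rfl
      · simp only [mem_setOf_eq]
        have : 0 < Δ / D2 := div_pos hΔ hD2
        linarith
      · simp only [mem_setOf_eq]; exact le_refl _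
      · simp only [mem_setOf_eq]; linarith
    exact fun x hx => convexHull_min hsub hconvS hx
  have hfc : Continuous f := continuous_id.inner continuous_const
  have himg : IsCompact (f '' K) := hKc.image hfc
  have hmem : sSup (f '' K) ∈ f '' K := himg.sSup_mem (hne.image f)
  obtain ⟨q, hqK, hq⟩ := hmem
  have hw : minWidth K ≤ sSup (f '' K) - sInf (f '' K) :=
    minWidth_le_width K hKc hne ⟨n, by rwa [mem_sphere_zero_iff_norm]⟩
  have hinf : f u ≤ sInf (f '' K) := by
    apply le_csInf (hne.image f)
    rintro y ⟨k, hk, rfl⟩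
    exact hT0 k (hKT hk)
  have hfq : minWidth K + f u ≤ f q := by rw [hq]; linarith
  obtain ⟨a, b, c, ha, hb, hc, habc, hq_eq⟩ := mem_tri (hKT hqK)
  have hfq2 : f q = a * f v + b * f u + c * f w := by
    rw [hq_eq, show a • v + b • u + c • w = (1:ℝ) • (a • v + b • u) + c • w from by module,
      hfaff, hfaff]
    ring
  have key : minWidth K ≤ a * (Δ / D2) := by
    have h1 : f q - f u = a * (f v - f u) + c * (f w - f u) := by
      rw [hfq2, show b = 1 - a - c by linarith]; ring
    rw [hgw, hgv] at h1
    linarith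
  have hdistq : dist v q ≤ (1 - a) * M := by
    have hvq : v - q = b • (v - u) + c • (v - w) := by
      have ha1 : a = 1 - b - c := by linarith
      rw [hq_eq, ha1]; module
    rw [dist_eq_norm, hvq]
    calc ‖b • (v - u) + c • (v - w)‖ ≤ ‖b • (v - u)‖ + ‖c • (v - w)‖ := norm_add_le _ _
      _ = b * ‖v - u‖ + c * ‖v - w‖ := by
          rw [norm_smul, norm_smul, Real.norm_eq_abs, Real.norm_eq_abs,
            abs_of_nonneg hb, abs_of_nonneg hc]
      _ ≤ b * M + c * M := by
          have h1 : ‖v - u‖ = dist v u := (dist_eq_norm v u).symm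
          have h2 : ‖v - w‖ = dist v w := (dist_eq_norm v w).symm
          rw [h1, h2]
          exact add_le_add (mul_le_mul_of_nonneg_left hM1 hb)
            (mul_le_mul_of_nonneg_left hM2 hc)
      _ = (1 - a) * M := by rw [← add_mul, show b + c = 1 - a by linarith]
  have hfinal : (1 - a) * M ≤ (1 - minWidth K * D2 / Δ) * M := by
    apply mul_le_mul_of_nonneg_right _ hM0
    have : minWidth K * D2 / Δ ≤ a := by
      rw [div_le_iff₀ hΔ]
      have h := mul_le_mul_of_nonneg_right key (le_of_lt hD2)
      calc minWidth K * D2 ≤ a * (Δ / D2) * D2 := h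
        _ = a * Δ := by field_simp
    linarith
  exact le_trans (Metric.infDist_le_dist_of_mem hqK) (le_trans hdistq hfinal)

private lemma tri_width (A B C : Pl) (hs12 : dist A C ≤ dist B C) (hs23 : dist A B ≤ dist A C)
    (hs1 : 0 < dist B C) :
    |(B 0 - A 0) * (C 1 - A 1) - (B 1 - A 1) * (C 0 - A 0)|
      ≤ minWidth (convexHull ℝ ({A, B, C} : Set Pl)) * dist B C := by
  set δ : ℝ := (B 0 - A 0) * (C 1 - A 1) - (B 1 - A 1) * (C 0 - A 0) with hδdef
  set T : Set Pl := convexHull ℝ ({A, B, C} : Set Pl) with hTdef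
  have hTc : IsCompact T :=
    (Set.Finite.insert A ((Set.finite_singleton C).insert B)).isCompact_convexHull (𝕜 := ℝ)
  have hmemA : A ∈ T := subset_convexHull ℝ _ (by simp)
  have hmemB : B ∈ T := subset_convexHull ℝ _ (by simp)
  have hmemC : C ∈ T := subset_convexHull ℝ _ (by simp)
  rw [← div_le_iff₀ hs1]
  apply le_minWidth
  rintro ⟨θ, hθ⟩
  rw [mem_sphere_zero_iff_norm] at hθ
  have hunit : θ 0 ^ 2 + θ 1 ^ 2 = 1 := by
    have h := norm_sq_formula θ
    rw [hθ] at h; linarith [h.symm]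
  set W : ℝ := sSup ((fun x => (inner ℝ x θ : ℝ)) '' T) - sInf ((fun x => (inner ℝ x θ : ℝ)) '' T)
    with hWdef
  have hbdd1 := bddAbove_proj T hTc θ
  have hbdd2 := bddBelow_proj T hTc θ
  have hgap : ∀ x ∈ T, ∀ y ∈ T, |(inner ℝ x θ : ℝ) - (inner ℝ y θ : ℝ)| ≤ W := by
    intro x hx y hy
    have h1 : (inner ℝ x θ : ℝ) ≤ sSup _ := le_csSup hbdd1 (mem_image_of_mem _ hx)
    have h2 : sInf _ ≤ (inner ℝ y θ : ℝ) := csInf_le hbdd2 (mem_image_of_mem _ hy)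
    have h3 : (inner ℝ y θ : ℝ) ≤ sSup _ := le_csSup hbdd1 (mem_image_of_mem _ hy)
    have h4 : sInf _ ≤ (inner ℝ x θ : ℝ) := csInf_le hbdd2 (mem_image_of_mem _ hx)
    rw [abs_le, hWdef]
    constructor <;> linarith
  set τ : Pl := pt (-(θ 1)) (θ 0) with hτdef
  have hτ0 : τ 0 = -(θ 1) := rfl
  have hτ1 : τ 1 = θ 0 := rfl
  have hτnorm : ‖τ‖ = 1 := by
    have h := norm_sq_formula τ
    rw [hτ0, hτ1] at h
    nlinarith [norm_nonneg τ]
  set p : ℝ := (inner ℝ (B - A) θ : ℝ) with hp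
  set q : ℝ := (inner ℝ (C - A) θ : ℝ) with hq
  set p' : ℝ := (inner ℝ (B - A) τ : ℝ) with hp'
  set q' : ℝ := (inner ℝ (C - A) τ : ℝ) with hq'
  have hpq : p - q = (inner ℝ (B - C) θ : ℝ) := by
    rw [hp, hq, ← inner_sub_left]; congr 1; abel
  have h1 : |p| ≤ W := by
    rw [hp, inner_sub_left]; exact hgap B hmemB A hmemA
  have h2 : |q| ≤ W := by
    rw [hq, inner_sub_left]; exact hgap C hmemC A hmemA
  have h3 : |p - q| ≤ W := by
    rw [hpq, inner_sub_left]; exact hgap B hmemB C hmemC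
  have hcs : ∀ x : Pl, |(inner ℝ x τ : ℝ)| ≤ ‖x‖ := by
    intro x
    calc |(inner ℝ x τ : ℝ)| ≤ ‖x‖ * ‖τ‖ := abs_real_inner_le_norm x τ
      _ = ‖x‖ := by rw [hτnorm, mul_one]
  have h4 : |p'| ≤ dist B C := by
    refine le_trans (hcs _) ?_
    rw [← dist_eq_norm]
    calc dist B A = dist A B := dist_comm B A
      _ ≤ dist B C := le_trans hs23 hs12
  have h5 : |q'| ≤ dist B C := by
    refine le_trans (hcs _) ?_
    rw [← dist_eq_norm]
    calc dist C A = dist A C := dist_comm C A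
      _ ≤ dist B C := hs12
  have h6 : |p' - q'| ≤ dist B C := by
    have heq : p' - q' = (inner ℝ (B - C) τ : ℝ) := by
      rw [hp', hq', ← inner_sub_left]; congr 1; abel
    rw [heq]
    refine le_trans (hcs _) ?_
    rw [← dist_eq_norm]
  have hid : δ = p * q' - q * p' := by
    have expand : p * q' - q * p' = δ * (θ 0 ^ 2 + θ 1 ^ 2) := by
      rw [hp, hq, hp', hq', inner_formula, inner_formula, inner_formula, inner_formula,
        hτ0, hτ1, hδdef]
      have e1 : (B - A) 0 = B 0 - A 0 := rfl
      have e2 : (B - A) 1 = B 1 - A 1 := rfl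
      have e3 : (C - A) 0 = C 0 - A 0 := rfl
      have e4 : (C - A) 1 = C 1 - A 1 := rfl
      rw [e1, e2, e3, e4]; ring
    rw [expand, hunit, mul_one]
  rw [hid, div_le_iff₀ hs1]
  exact box p q p' q' W (dist B C) h1 h2 h3 h4 h5 h6

end Helpers

set_option maxHeartbeats 1000000 in
/-- Hausdorff distance between a convex body `K` with `r(K) < ω(K)/2` and its
circumscribed triangle `T` (a triangle containing `K` whose indisk is an indisk
of `K`), with side lengths `s₁ ≥ s₂ ≥ s₃`. -/
theorem hausdorffDist_body_circumscribed_triangle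
    (K : Set (EuclideanSpace ℝ (Fin 2)))
    (hKc : IsCompact K) (hKconv : Convex ℝ K) (hKint : (interior K).Nonempty)
    (hsmall : inradius K < minWidth K / 2)
    (A B C o : EuclideanSpace ℝ (Fin 2))
    (hnc : ¬ Collinear ℝ ({A, B, C} : Set (EuclideanSpace ℝ (Fin 2))))
    (hKT : K ⊆ convexHull ℝ {A, B, C})
    (hindisk : Metric.closedBall o (inradius K) ⊆ K)
    (hrT : inradius (convexHull ℝ {A, B, C}) = inradius K)
    (hs12 : dist A C ≤ dist B C) (hs23 : dist A B ≤ dist A C) :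
    Metric.hausdorffDist K (convexHull ℝ {A, B, C})
      ≤ (dist B C - dist A B) +
        dist A B * (minWidth (convexHull ℝ {A, B, C}) - minWidth K) /
          minWidth (convexHull ℝ {A, B, C}) := by
  classical
  set s1 : ℝ := dist B C with hs1def
  set s2 : ℝ := dist A C with hs2def
  set s3 : ℝ := dist A B with hs3def
  set T : Set (EuclideanSpace ℝ (Fin 2)) := convexHull ℝ {A, B, C} with hTdef
  have hKne : K.Nonempty := hKint.mono interior_subset
  have hTc : IsCompact T :=
    (Set.Finite.insert A ((Set.finite_singleton C).insert B)).isCompact_convexHull (𝕜 := ℝ)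
  set δ : ℝ := (B 0 - A 0) * (C 1 - A 1) - (B 1 - A 1) * (C 0 - A 0) with hδdef
  have hδ : δ ≠ 0 := det_ne A B C hnc
  set Δ : ℝ := |δ| with hΔdef
  have hΔ : 0 < Δ := abs_pos.2 hδ
  have hAB : A ≠ B := by
    intro h
    apply hnc
    rw [h, Set.insert_idem]
    exact collinear_pair ℝ B C
  have hs3 : 0 < s3 := dist_pos.2 hAB
  have hs2 : 0 < s2 := lt_of_lt_of_le hs3 hs23
  have hs1 : 0 < s1 := lt_of_lt_of_le hs2 hs12
  set ω : ℝ := minWidth K with hωdef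
  set ωT : ℝ := minWidth T with hωTdef
  have hω0 : 0 ≤ ω := minWidth_nonneg' K hKc hKne
  have hωω : ω ≤ ωT := minWidth_mono K T hKc hKne hTc hKT
  have hωTlow : Δ ≤ ωT * s1 := tri_width A B C hs12 hs23 hs1
  have hωT : 0 < ωT :=
    lt_of_lt_of_le (div_pos hΔ hs1) ((div_le_iff₀ hs1).2 hωTlow)
  -- the right hand side
  set R : ℝ := (s1 - s3) + s3 * (ωT - ω) / ωT with hRdef
  have hRalt : R = s1 - s3 * ω / ωT := by
    rw [hRdef]; field_simp; ring
  have hR0 : 0 ≤ R := by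
    rw [hRalt]
    have h1 : s3 * ω / ωT ≤ s3 := by
      rw [div_le_iff₀ hωT]
      nlinarith
    have h2 : s3 ≤ s1 := le_trans hs23 hs12
    linarith
  -- the three vertex estimates
  have hestC : Metric.infDist C K ≤ R := by
    have hset : ({C, A, B} : Set (EuclideanSpace ℝ (Fin 2))) = {A, B, C} := by
      ext x
      simp only [Set.mem_insert_iff, Set.mem_singleton_iff]
      tauto
    have hest := vertex_est K hKc hKne C A B (by rw [hset]; exact hKT) hδ s1
      (by rw [dist_comm]; exact hs12) (le_of_eq (dist_comm C B))
    have hkey : s3 * ω / ωT ≤ ω * s3 / Δ * s1 := by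
      rw [div_mul_eq_mul_div, div_le_div_iff₀ hωT hΔ]
      nlinarith [mul_le_mul_of_nonneg_left hωTlow (mul_nonneg hω0 hs3.le),
        mul_le_mul_of_nonneg_left hs23 (mul_nonneg (mul_nonneg hω0 hωT.le) hs1.le)]
    have hexp : (1 - ω * s3 / Δ) * s1 = s1 - ω * s3 / Δ * s1 := by ring
    rw [hRalt]
    rw [show dist A B = s3 from rfl] at hest
    calc Metric.infDist C K ≤ (1 - ω * s3 / Δ) * s1 := hest
      _ = s1 - ω * s3 / Δ * s1 := hexp
      _ ≤ s1 - s3 * ω / ωT := by linarith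
  have hestB : Metric.infDist B K ≤ R := by
    have hset : ({B, A, C} : Set (EuclideanSpace ℝ (Fin 2))) = {A, B, C} := by
      ext x
      simp only [Set.mem_insert_iff, Set.mem_singleton_iff]
      tauto
    have hδB : (C 0 - A 0) * (B 1 - A 1) - (C 1 - A 1) * (B 0 - A 0) ≠ 0 := by
      rw [show (C 0 - A 0) * (B 1 - A 1) - (C 1 - A 1) * (B 0 - A 0) = -δ from by
        rw [hδdef]; ring]
      exact neg_ne_zero.2 hδ
    have hest := vertex_est K hKc hKne B A C (by rw [hset]; exact hKT) hδB s1
      (by rw [dist_comm]; exact le_trans hs23 hs12) (le_refl _)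
    rw [show |(C 0 - A 0) * (B 1 - A 1) - (C 1 - A 1) * (B 0 - A 0)| = Δ from by
      rw [show (C 0 - A 0) * (B 1 - A 1) - (C 1 - A 1) * (B 0 - A 0) = -δ from by
        rw [hδdef]; ring, abs_neg, hΔdef]] at hest
    have hkey : s3 * ω / ωT ≤ ω * s2 / Δ * s1 := by
      rw [div_mul_eq_mul_div, div_le_div_iff₀ hωT hΔ]
      nlinarith [mul_le_mul_of_nonneg_left hωTlow (mul_nonneg hω0 hs3.le),
        mul_le_mul_of_nonneg_left hs23 (mul_nonneg (mul_nonneg hω0 hωT.le) hs1.le)]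
    have hexp : (1 - ω * s2 / Δ) * s1 = s1 - ω * s2 / Δ * s1 := by ring
    rw [hRalt]
    rw [show dist A C = s2 from rfl] at hest
    calc Metric.infDist B K ≤ (1 - ω * s2 / Δ) * s1 := hest
      _ = s1 - ω * s2 / Δ * s1 := hexp
      _ ≤ s1 - s3 * ω / ωT := by linarith
  have hestA : Metric.infDist A K ≤ R := by
    have hδA : (C 0 - B 0) * (A 1 - B 1) - (C 1 - B 1) * (A 0 - B 0) ≠ 0 := by
      rw [show (C 0 - B 0) * (A 1 - B 1) - (C 1 - B 1) * (A 0 - B 0) = δ from by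
        rw [hδdef]; ring]
      exact hδ
    have hest := vertex_est K hKc hKne A B C hKT hδA s2
      hs23 (le_refl _)
    rw [show |(C 0 - B 0) * (A 1 - B 1) - (C 1 - B 1) * (A 0 - B 0)| = Δ from by
      rw [show (C 0 - B 0) * (A 1 - B 1) - (C 1 - B 1) * (A 0 - B 0) = δ from by
        rw [hδdef]; ring, hΔdef]] at hest
    have hkey : s3 * ω / ωT ≤ ω * s1 / Δ * s2 := by
      rw [div_mul_eq_mul_div, div_le_div_iff₀ hωT hΔ]
      nlinarith [mul_le_mul_of_nonneg_left hωTlow (mul_nonneg hω0 hs3.le),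
        mul_le_mul_of_nonneg_left hs23 (mul_nonneg (mul_nonneg hω0 hωT.le) hs1.le)]
    have hexp : (1 - ω * s1 / Δ) * s2 = s2 - ω * s1 / Δ * s2 := by ring
    rw [hRalt]
    rw [show dist B C = s1 from rfl] at hest
    have hs21 : s2 ≤ s1 := hs12
    calc Metric.infDist A K ≤ (1 - ω * s1 / Δ) * s2 := hest
      _ = s2 - ω * s1 / Δ * s2 := hexp
      _ ≤ s1 - s3 * ω / ωT := by linarith
  -- assemble the Hausdorff bound
  refine Metric.hausdorffDist_le_of_mem_dist hR0 ?_ ?_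
  · intro x hx
    exact ⟨x, hKT hx, by rw [dist_self]; exact hR0⟩
  · intro x hx
    obtain ⟨a, b, c, ha, hb, hc, habc, hx_eq⟩ := mem_tri hx
    obtain ⟨kA, hkA, hdA⟩ := hKc.exists_infDist_eq_dist hKne A
    obtain ⟨kB, hkB, hdB⟩ := hKc.exists_infDist_eq_dist hKne B
    obtain ⟨kC, hkC, hdC⟩ := hKc.exists_infDist_eq_dist hKne C
    refine ⟨a • kA + b • kB + c • kC, combo_mem hKconv hkA hkB hkC ha hb hc habc, ?_⟩
    have hxk : x - (a • kA + b • kB + c • kC)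
        = a • (A - kA) + b • (B - kB) + c • (C - kC) := by
      rw [hx_eq]; module
    rw [dist_eq_norm, hxk]
    have hnorm : ‖a • (A - kA) + b • (B - kB) + c • (C - kC)‖
        ≤ a * ‖A - kA‖ + b * ‖B - kB‖ + c * ‖C - kC‖ := by
      calc ‖a • (A - kA) + b • (B - kB) + c • (C - kC)‖
          ≤ ‖a • (A - kA) + b • (B - kB)‖ + ‖c • (C - kC)‖ := norm_add_le _ _
        _ ≤ ‖a • (A - kA)‖ + ‖b • (B - kB)‖ + ‖c • (C - kC)‖ := by
            have := norm_add_le (a • (A - kA)) (b • (B - kB))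
            linarith
        _ = a * ‖A - kA‖ + b * ‖B - kB‖ + c * ‖C - kC‖ := by
            rw [norm_smul, norm_smul, norm_smul, Real.norm_eq_abs, Real.norm_eq_abs,
              Real.norm_eq_abs, abs_of_nonneg ha, abs_of_nonneg hb, abs_of_nonneg hc]
    have hA' : ‖A - kA‖ ≤ R := by rw [← dist_eq_norm, ← hdA]; exact hestA
    have hB' : ‖B - kB‖ ≤ R := by rw [← dist_eq_norm, ← hdB]; exact hestB
    have hC' : ‖C - kC‖ ≤ R := by rw [← dist_eq_norm, ← hdC]; exact hestC
    calc ‖a • (A - kA) + b • (B - kB) + c • (C - kC)‖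
        ≤ a * ‖A - kA‖ + b * ‖B - kB‖ + c * ‖C - kC‖ := hnorm
      _ ≤ a * R + b * R + c * R := by
          exact add_le_add (add_le_add (mul_le_mul_of_nonneg_left hA' ha)
            (mul_le_mul_of_nonneg_left hB' hb)) (mul_le_mul_of_nonneg_left hC' hc)
      _ = R := by rw [← add_mul, ← add_mul, habc, one_mul]
end

section
/- The function φ(x) := 3x²(π/3 − arccos(x/(1−x))) + 3x√(1−2x) is strictly increasing on [1/3, 1/2], with φ(1/3) = 1/√3. -/
open Metric Set MeasureTheory Pointwise

/-!
Differentiating, φ'(x) = 6x (π/3 − arccos(x/(1−x))) + 3(1−2x)^{3/2}/(1−x). For x ≥ 1/3 we have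
x/(1−x) ≥ 1/2, so arccos(x/(1−x)) ≤ π/3 and the first term is nonnegative, while the second is
positive for x < 1/2.
-/

open Real

lemma arccos_one_half : arccos (1 / 2) = π / 3 := by
  rw [← cos_pi_div_three, arccos_cos (by positivity) (by linarith [pi_pos])]

lemma arccos_div_one_sub_le_pi_div_three {x : ℝ} (hx : 1 / 3 ≤ x) (hx1 : x < 1) :
    arccos (x / (1 - x)) ≤ π / 3 :=
  arccos_one_half ▸ arccos_le_arccos ((le_div_iff₀ (by linarith)).2 (by linarith))

lemma hasDerivAt_div_one_sub {x : ℝ} (hx : x ≠ 1) :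
    HasDerivAt (fun x => x / (1 - x)) (1 / (1 - x) ^ 2) x := by
  have hx' : 1 - x ≠ 0 := sub_ne_zero.2 hx.symm
  refine ((hasDerivAt_id' x).div ((hasDerivAt_id' x).const_sub 1) hx').congr_deriv ?_
  field_simp
  ring

lemma hasDerivAt_sqrt_one_sub_two_mul {x : ℝ} (hx : x < 1 / 2) :
    HasDerivAt (fun x => √(1 - 2 * x)) (-(1 / √(1 - 2 * x))) x := by
  refine ((hasDerivAt_sqrt (by linarith)).comp x
    (((hasDerivAt_id' x).const_mul 2).const_sub 1)).congr_deriv ?_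
  field_simp

lemma hasDerivAt_arccos_div_one_sub {x : ℝ} (hx : x < 1 / 2) :
    HasDerivAt (fun x => arccos (x / (1 - x))) (-(1 / ((1 - x) * √(1 - 2 * x)))) x := by
  have h1x : 0 < 1 - x := by linarith
  have hsqrt : √(1 - (x / (1 - x)) ^ 2) = √(1 - 2 * x) / (1 - x) := by
    rw [show 1 - (x / (1 - x)) ^ 2 = (1 - 2 * x) / (1 - x) ^ 2 by field_simp; ring,
      sqrt_div' _ (sq_nonneg _), sqrt_sq h1x.le]
  have hlt : x / (1 - x) < 1 := (div_lt_one h1x).2 (by linarith)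
  have hgt : -1 < x / (1 - x) := (lt_div_iff₀ h1x).2 (by linarith)
  refine ((hasDerivAt_arccos hgt.ne' hlt.ne).comp x
    (hasDerivAt_div_one_sub (by linarith))).congr_deriv ?_
  rw [hsqrt]
  field_simp

noncomputable def phiDeriv (x : ℝ) : ℝ :=
  6 * x * (π / 3 - arccos (x / (1 - x))) + 3 * (1 - 2 * x) * √(1 - 2 * x) / (1 - x)

lemma hasDerivAt_phi {x : ℝ} (hx : x < 1 / 2) : HasDerivAt phi (phiDeriv x) x := by
  have hssq : √(1 - 2 * x) ^ 2 = 1 - 2 * x := sq_sqrt (by linarith)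
  have hpoly : HasDerivAt (fun x : ℝ => 3 * x ^ 2) (6 * x) x := by
    refine ((hasDerivAt_pow 2 x).const_mul 3).congr_deriv ?_; ring
  have hlin : HasDerivAt (fun x : ℝ => 3 * x) 3 x := by
    simpa using (hasDerivAt_id x).const_mul 3
  refine ((hpoly.mul ((hasDerivAt_arccos_div_one_sub hx).const_sub (π / 3))).add
    (hlin.mul (hasDerivAt_sqrt_one_sub_two_mul hx))).congr_deriv ?_
  have h1x : 1 - x ≠ 0 := by linarith
  have hs : √(1 - 2 * x) ≠ 0 := (sqrt_pos.2 (by linarith)).ne'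
  unfold phiDeriv
  generalize √(1 - 2 * x) = s at hs hssq ⊢
  field_simp
  linear_combination 9 * x * hssq

lemma phiDeriv_pos {x : ℝ} (hx : 1 / 3 ≤ x) (hx' : x < 1 / 2) : 0 < phiDeriv x := by
  have hangle := arccos_div_one_sub_le_pi_div_three hx (by linarith)
  have h12x : 0 < 1 - 2 * x := by linarith
  have h1x : 0 < 1 - x := by linarith
  have harc_term : 0 ≤ 6 * x * (π / 3 - arccos (x / (1 - x))) :=
    mul_nonneg (by linarith) (by linarith)
  have hsqrt_term : 0 < 3 * (1 - 2 * x) * √(1 - 2 * x) / (1 - x) := by positivity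
  unfold phiDeriv
  linarith

lemma continuousOn_phi : ContinuousOn phi {1}ᶜ := by
  have hdiv : ContinuousOn (fun x : ℝ => x / (1 - x)) {1}ᶜ :=
    continuousOn_id.div (by fun_prop) fun x hx => sub_ne_zero.2 (Ne.symm hx)
  have harc := continuous_arccos.comp_continuousOn hdiv
  unfold phi
  fun_prop

lemma phi_one_third : phi (1 / 3) = 1 / √3 := by
  have harc : arccos ((1 / 3 : ℝ) / (1 - 1 / 3)) = π / 3 := by norm_num [arccos_one_half]
  rw [phi, harc, show (1 : ℝ) - 2 * (1 / 3) = 3⁻¹ by norm_num, sqrt_inv]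
  ring

/-- The function φ is strictly increasing on [1/3, 1/2], with φ(1/3) = 1/√3. -/
theorem phi_strictMonoOn :
    StrictMonoOn phi (Set.Icc (1 / 3 : ℝ) (1 / 2)) ∧ phi (1 / 3) = 1 / Real.sqrt 3 := by
  refine ⟨strictMonoOn_of_hasDerivWithinAt_pos (f' := phiDeriv) (convex_Icc _ _) ?_ ?_ ?_,
    phi_one_third⟩
  · exact continuousOn_phi.mono fun x hx (h : x = 1) => by linarith [hx.2]
  · rw [interior_Icc]
    exact fun x hx => (hasDerivAt_phi hx.2).hasDerivWithinAt
  · rw [interior_Icc]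
    exact fun x hx => phiDeriv_pos hx.1.le hx.2
end

section
/- The derivative of φ(x) = 3x²(π/3 − arccos(x/(1−x))) + 3x√(1−2x) on (1/3, 1/2) equals φ'(x) = 6x(π/3 − arccos(x/(1−x))) + 3(1−2x)^{3/2}/(1−x), and satisfies φ'(x) ≥ 1/√5 for all x ∈ (1/3, 1/2). -/
open Metric Set MeasureTheory Pointwise

private lemma arccos_anti {a b : ℝ} (h : a ≤ b) : Real.arccos b ≤ Real.arccos a := by
  have := Real.monotone_arcsin h
  unfold Real.arccos
  linarith

private lemma phi_alg (s A x : ℝ) (hs : 0 < s) (hx : x = (1 - s^2)/2) :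
    3*(2*x)*A + 3*x^2 * (-(-(1/(s/(1-x))) * (1/(1-x)^2))) + (3*s + 3*x*(-2/(2*s)))
      = 6*x*A + 3*(1-2*x)*s/(1-x) := by
  subst hx
  have h2 : (0:ℝ) < 1 + s^2 := by positivity
  have e : (1:ℝ) - (1-s^2)/2 = (1+s^2)/2 := by ring
  rw [e, one_div_div]
  field_simp
  ring

set_option maxHeartbeats 1000000 in
private lemma phi_bound (x : ℝ) (hx1 : 1/3 < x) (hx2 : x < 1/2) :
    1 / Real.sqrt 5 ≤
      6 * x * (Real.pi / 3 - Real.arccos (x / (1 - x)))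
        + 3 * (1 - 2 * x) * Real.sqrt (1 - 2 * x) / (1 - x) := by
  have h1x : (0:ℝ) < 1 - x := by linarith
  have h12x : (0:ℝ) < 1 - 2*x := by linarith
  have hxpos : (0:ℝ) < x := by linarith
  obtain ⟨s, hsdef⟩ : ∃ t : ℝ, t = Real.sqrt (1-2*x) := ⟨_, rfl⟩
  obtain ⟨a, hadef⟩ : ∃ t : ℝ, t = Real.sqrt 5 := ⟨_, rfl⟩
  rw [← hsdef, ← hadef]
  have hs : (0:ℝ) < s := by rw [hsdef]; exact Real.sqrt_pos.2 h12x
  have hs2 : s ^ 2 = 1-2*x := by rw [hsdef]; exact Real.sq_sqrt h12x.le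
  have ha : (0:ℝ) < a := by rw [hadef]; exact Real.sqrt_pos.2 (by norm_num)
  have ha2 : a^2 = 5 := by rw [hadef]; exact Real.sq_sqrt (by norm_num)
  have huge : (1:ℝ)/2 < x / (1-x) := by rw [lt_div_iff₀ h1x]; linarith
  have harccos_half : Real.arccos (1/2) = Real.pi/3 := by
    rw [show (1/2:ℝ) = Real.cos (Real.pi/3) from (Real.cos_pi_div_three).symm]
    exact Real.arccos_cos (by positivity) (by linarith [Real.pi_pos])
  have hT0 : 0 ≤ Real.pi/3 - Real.arccos (x / (1-x)) := by
    have := arccos_anti huge.le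
    rw [harccos_half] at this
    linarith
  have hF0 : 0 ≤ 6 * x * (Real.pi/3 - Real.arccos (x / (1-x))) := by positivity
  have hG0 : 0 ≤ 3 * (1 - 2*x) * s / (1 - x) := by positivity
  rcases le_total x (2/5) with hc | hc
  · -- sqrt term dominates
    have hw2 : (a*s)^2 = 5*(1-2*x) := by rw [mul_pow, ha2, hs2]
    have h5s : 1 ≤ (a*s)^2 := by rw [hw2]; linarith
    have has1 : 1 ≤ a*s := by nlinarith [h5s, mul_pos ha hs]
    have key : 1/a ≤ 3 * (1 - 2*x) * s / (1 - x) := by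
      rw [div_le_div_iff₀ ha h1x]
      have h₁ : 0 ≤ (a*s - 1) * (6*(a*s)^2 + 5*(a*s) + 5) := by
        apply mul_nonneg (by linarith) (by positivity)
      have h₂ : 5*(1-2*x) + 5 ≤ 6*(a*s)^3 := by nlinarith [h₁, hw2]
      have hw3 : 3*(1-2*x)*s*a*5 = 3*(a*s)^3 := by
        rw [← hs2]; ring_nf; nlinarith [ha2, hs]
      nlinarith [hw3, h₂]
    linarith
  · -- arccos term dominates
    have hu23 : (2:ℝ)/3 ≤ x/(1-x) := by rw [le_div_iff₀ h1x]; linarith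
    have hcos : Real.cos (43/50) ≤ 2/3 := by
      have hb := Real.cos_bound (x := (43/50:ℝ))
        (by rw [abs_of_pos (by norm_num : (0:ℝ) < 43/50)]; norm_num)
      rw [abs_le, abs_of_pos (by norm_num : (0:ℝ) < 43/50)] at hb
      obtain ⟨hb1, hb2⟩ := hb
      norm_num at hb2 ⊢
      linarith
    have hA : Real.arccos (x/(1-x)) ≤ 43/50 := by
      calc Real.arccos (x/(1-x)) ≤ Real.arccos (Real.cos (43/50)) :=
            arccos_anti (le_trans hcos hu23)
        _ = 43/50 := Real.arccos_cos (by norm_num) (by linarith [Real.pi_gt_three])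
    have hxT : 12/5 * (Real.pi/3 - 43/50) ≤ 6 * x * (Real.pi/3 - Real.arccos (x/(1-x))) := by
      have h6x : (12:ℝ)/5 ≤ 6*x := by linarith
      calc (12:ℝ)/5 * (Real.pi/3 - 43/50)
          ≤ 12/5 * (Real.pi/3 - Real.arccos (x/(1-x))) := by
            apply mul_le_mul_of_nonneg_left (by linarith) (by norm_num)
        _ ≤ 6 * x * (Real.pi/3 - Real.arccos (x/(1-x))) :=
            mul_le_mul_of_nonneg_right h6x hT0
    have ha_lb : (559/250:ℝ) ≤ a := by
      rw [hadef, Real.le_sqrt (by norm_num) (by norm_num)]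
      norm_num
    have h1a : 1/a ≤ 250/559 := by
      rw [div_le_div_iff₀ ha (by norm_num)]
      linarith
    have hpi := Real.pi_gt_d6
    have hnum : (250:ℝ)/559 ≤ 12/5 * (Real.pi/3 - 43/50) := by
      linarith
    linarith

set_option maxHeartbeats 1000000 in
/-- The derivative of φ on (1/3, 1/2) and its lower bound 1/√5. -/
theorem phi_deriv :
    ∀ x ∈ Set.Ioo (1 / 3 : ℝ) (1 / 2),
      HasDerivAt phi
        (6 * x * (Real.pi / 3 - Real.arccos (x / (1 - x)))
          + 3 * (1 - 2 * x) * Real.sqrt (1 - 2 * x) / (1 - x)) x ∧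
      1 / Real.sqrt 5 ≤
        6 * x * (Real.pi / 3 - Real.arccos (x / (1 - x)))
          + 3 * (1 - 2 * x) * Real.sqrt (1 - 2 * x) / (1 - x) := by
  intro x hx
  obtain ⟨hx1, hx2⟩ := hx
  refine ⟨?_, phi_bound x hx1 hx2⟩
  have h1x : (0:ℝ) < 1 - x := by linarith
  have h12x : (0:ℝ) < 1 - 2*x := by linarith
  have hxpos : (0:ℝ) < x := by linarith
  have hs : (0:ℝ) < Real.sqrt (1-2*x) := Real.sqrt_pos.2 h12x
  have hs2 : Real.sqrt (1-2*x) ^ 2 = 1-2*x := Real.sq_sqrt h12x.le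
  have hult : x / (1-x) < 1 := by rw [div_lt_one h1x]; linarith
  have humne : x / (1-x) ≠ -1 := by
    have : (0:ℝ) < x / (1-x) := div_pos hxpos h1x
    linarith
  have hden : HasDerivAt (fun y : ℝ => 1 - y) (-1) x := by
    simpa using (hasDerivAt_id x).const_sub 1
  have hdu : HasDerivAt (fun y : ℝ => y / (1 - y)) (1/(1-x)^2) x := by
    have h := (hasDerivAt_id x).div hden h1x.ne'
    convert h using 1
    · rfl
    · rfl
    · rfl
    · simp only [id]; ring
  have harc : HasDerivAt (fun y : ℝ => Real.arccos (y/(1-y)))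
      (-(1/Real.sqrt (1-(x/(1-x))^2)) * (1/(1-x)^2)) x :=
    HasDerivAt.comp (h₂ := Real.arccos) (h := fun y : ℝ => y/(1-y)) x (Real.hasDerivAt_arccos humne hult.ne) hdu
  have h1u2 : 1 - (x/(1-x))^2 = (1-2*x)/(1-x)^2 := by
    field_simp
    ring
  have hsqu : Real.sqrt (1-(x/(1-x))^2) = Real.sqrt (1-2*x)/(1-x) := by
    rw [h1u2, Real.sqrt_div h12x.le, Real.sqrt_sq h1x.le]
  have hlin : HasDerivAt (fun y : ℝ => 1 - 2*y) (-2) x := by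
    simpa using (HasDerivAt.const_sub 1 ((hasDerivAt_id x).const_mul 2))
  have hsqrtd : HasDerivAt (fun y : ℝ => Real.sqrt (1-2*y))
      (-2/(2*Real.sqrt (1-2*x))) x := hlin.sqrt h12x.ne'
  have h1 : HasDerivAt (fun y : ℝ => 3*y^2) (3*(2*x)) x := by
    simpa using (hasDerivAt_pow 2 x).const_mul 3
  have h2 : HasDerivAt (fun y : ℝ => Real.pi/3 - Real.arccos (y/(1-y)))
      (-(-(1/Real.sqrt (1-(x/(1-x))^2)) * (1/(1-x)^2))) x := harc.const_sub _
  have h3 := h1.mul h2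
  have h4 : HasDerivAt (fun y : ℝ => 3*y) 3 x := by
    simpa using (hasDerivAt_id x).const_mul 3
  have h5 := h4.mul hsqrtd
  have H := h3.add h5
  rw [hsqu] at H
  have heq := phi_alg (Real.sqrt (1-2*x)) (Real.pi/3 - Real.arccos (x/(1-x))) x hs
    (by linarith [hs2])
  have H2 : HasDerivAt (fun y : ℝ =>
      3*y^2*(Real.pi/3 - Real.arccos (y/(1-y))) + 3*y*Real.sqrt (1-2*y))
      (6 * x * (Real.pi / 3 - Real.arccos (x / (1 - x)))
        + 3 * (1 - 2 * x) * Real.sqrt (1 - 2 * x) / (1 - x)) x := by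
    exact H.congr_deriv heq
  exact H2
end

section
/- The function ψ(x, y) := πx² + 2x√(1−2x) − 2x² arccos(x/(1−x)) + x√(y² − x²) − x² arccos(x/y), defined on {(x,y) : 1/3 ≤ x ≤ 1/2, y ≥ 1−x}, is nondecreasing in both variables, and ψ(x, y) ≥ 1/√3 on its whole domain. -/
open Metric Set MeasureTheory Pointwise

section Helpers

private lemma arccos_half : Real.arccos (1/2) = Real.pi/3 := by
  rw [← Real.cos_pi_div_three]
  exact Real.arccos_cos (by positivity) (by linarith [Real.pi_pos])

private lemma arccos_anti_s16 {u v : ℝ} (h : u ≤ v) : Real.arccos v ≤ Real.arccos u := by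
  rw [Real.arccos_eq_pi_div_two_sub_arcsin, Real.arccos_eq_pi_div_two_sub_arcsin]
  linarith [Real.monotone_arcsin h]

private lemma arccosA_le {x : ℝ} (h1 : 1/3 ≤ x) (h2 : x ≤ 1/2) :
    Real.arccos (x/(1-x)) ≤ Real.pi/3 := by
  rw [← arccos_half]
  apply arccos_anti_s16
  rw [le_div_iff₀ (by linarith)]
  linarith

private lemma sqrt_one_sub_div_sq {x y : ℝ} (hx : 0 ≤ x) (hxy : x < y) :
    Real.sqrt (1 - (x/y)^2) = Real.sqrt (y^2 - x^2) / y := by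
  have hy : 0 < y := hx.trans_lt hxy
  rw [show 1 - (x/y)^2 = (y^2 - x^2)/y^2 by field_simp,
    Real.sqrt_div (by nlinarith), Real.sqrt_sq hy.le]

private lemma sqrt_one_sub_div_sq' {x : ℝ} (hx : 0 ≤ x) (h2 : x < 1/2) :
    Real.sqrt (1 - (x/(1-x))^2) = Real.sqrt (1-2*x) / (1-x) := by
  have h1x : (0:ℝ) < 1 - x := by linarith
  rw [show 1 - (x/(1-x))^2 = (1-2*x)/(1-x)^2 by field_simp; ring,
    Real.sqrt_div (by linarith), Real.sqrt_sq h1x.le]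

private lemma key_tb {x y : ℝ} (hx : 0 < x) (hxy : x ≤ y) :
    x * Real.arccos (x/y) ≤ Real.sqrt (y^2 - x^2) := by
  rcases eq_or_lt_of_le hxy with h | h
  · rw [← h, div_self hx.ne', Real.arccos_one, mul_zero]
    positivity
  · have hy : 0 < y := hx.trans h
    have harg1 : x/y < 1 := (div_lt_one hy).mpr h
    have harg0 : 0 < x/y := by positivity
    have hb0 : 0 < Real.arccos (x/y) := Real.arccos_pos.mpr harg1
    have hb2 : Real.arccos (x/y) < Real.pi/2 := Real.arccos_lt_pi_div_two.mpr harg0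
    have hlt := Real.lt_tan hb0 hb2
    rw [Real.tan_arccos, sqrt_one_sub_div_sq hx.le h] at hlt
    have heq : Real.sqrt (y^2-x^2)/y/(x/y) = Real.sqrt (y^2-x^2)/x := by
      field_simp
    rw [heq] at hlt
    rw [mul_comm, ← le_div_iff₀ hx]
    exact hlt.le

private lemma hasDerivAt_arccosA {x : ℝ} (hx : 0 ≤ x) (h2 : x < 1/2) :
    HasDerivAt (fun x : ℝ => Real.arccos (x/(1-x))) (-(1/((1-x) * Real.sqrt (1-2*x)))) x := by
  have h1x : (0:ℝ) < 1 - x := by linarith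
  have hs : 0 < Real.sqrt (1-2*x) := Real.sqrt_pos.mpr (by linarith)
  have hu : HasDerivAt (fun x : ℝ => x/(1-x)) ((1*(1-x) - x*(-(1)))/(1-x)^2) x := by
    have h := (hasDerivAt_id' (x := x)).div
      ((hasDerivAt_const x (1:ℝ)).sub (hasDerivAt_id' (x := x))) (by
        show (1:ℝ) - x ≠ 0; linarith)
    refine h.congr_deriv ?_
    norm_num
  have harg0 : 0 ≤ x/(1-x) := div_nonneg hx h1x.le
  have harg1 : x/(1-x) < 1 := by rw [div_lt_one h1x]; linarith
  have hd := (Real.hasDerivAt_arccos (x := x/(1-x))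
    (by linarith) (by linarith)).comp x hu
  refine hd.congr_deriv ?_
  rw [sqrt_one_sub_div_sq' hx h2]
  field_simp
  ring

private lemma hasDerivAt_arccosB {x y : ℝ} (hx : 0 ≤ x) (hxy : x < y) :
    HasDerivAt (fun x : ℝ => Real.arccos (x/y)) (-(1/Real.sqrt (y^2-x^2))) x := by
  have hy : 0 < y := hx.trans_lt hxy
  have ht : 0 < Real.sqrt (y^2-x^2) := Real.sqrt_pos.mpr (by nlinarith)
  have hu : HasDerivAt (fun x : ℝ => x/y) (1/y) x := (hasDerivAt_id' (x := x)).div_const y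
  have harg0 : 0 ≤ x/y := div_nonneg hx hy.le
  have harg1 : x/y < 1 := (div_lt_one hy).mpr hxy
  have hd := (Real.hasDerivAt_arccos (x := x/y) (by linarith) (by linarith)).comp x hu
  refine hd.congr_deriv ?_
  rw [sqrt_one_sub_div_sq hx hxy]
  field_simp

private lemma hasDerivAt_arccosC {x y : ℝ} (hx : 0 < x) (hxy : x < y) :
    HasDerivAt (fun y : ℝ => Real.arccos (x/y)) (x/(y * Real.sqrt (y^2-x^2))) y := by
  have hy : 0 < y := hx.trans hxy
  have ht : 0 < Real.sqrt (y^2-x^2) := Real.sqrt_pos.mpr (by nlinarith)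
  have hu : HasDerivAt (fun y : ℝ => x/y) ((0*y - x*1)/y^2) y :=
    (hasDerivAt_const y x).div (hasDerivAt_id' (x := y)) (by show y ≠ 0; exact hy.ne')
  have harg0 : 0 ≤ x/y := div_nonneg hx.le hy.le
  have harg1 : x/y < 1 := (div_lt_one hy).mpr hxy
  have hd := (Real.hasDerivAt_arccos (x := x/y) (by linarith) (by linarith)).comp y hu
  refine hd.congr_deriv ?_
  rw [sqrt_one_sub_div_sq hx.le hxy]
  field_simp
  ring

private lemma psi_mono_y {x : ℝ} (h1 : 1/3 ≤ x) (h2 : x ≤ 1/2) :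
    MonotoneOn (fun y => psi x y) (Ici (1-x)) := by
  have hx0 : 0 < x := by linarith
  apply monotoneOn_of_hasDerivWithinAt_nonneg (convex_Ici _)
    (f' := fun y => x*(y^2-x^2)/(y * Real.sqrt (y^2-x^2)))
  · unfold psi
    apply ContinuousOn.sub
    · apply ContinuousOn.add continuousOn_const
      exact (continuous_const.mul (Real.continuous_sqrt.comp
        ((continuous_pow 2).sub continuous_const))).continuousOn
    · apply ContinuousOn.mul continuousOn_const
      apply Real.continuous_arccos.comp_continuousOn
      apply ContinuousOn.div continuousOn_const continuousOn_id
      intro y hy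
      simp only [mem_Ici] at hy
      intro h; simp only [id_eq] at h; rw [h] at hy; linarith
  · intro y hy
    rw [interior_Ici] at hy
    simp only [mem_Ioi] at hy
    have hxy : x < y := by linarith
    have hy0 : 0 < y := by linarith
    have ht : 0 < Real.sqrt (y^2-x^2) := Real.sqrt_pos.mpr (by nlinarith)
    apply HasDerivAt.hasDerivWithinAt
    unfold psi
    have dD : HasDerivAt (fun y : ℝ => y ^ 2 - x ^ 2) (2*y^1 - 0) y := by
      have := (hasDerivAt_pow 2 y).sub_const (x^2)
      exact this.congr_deriv (by norm_num)
    have dDs := dD.sqrt (by show y^2 - x^2 ≠ 0; nlinarith)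
    have dE := hasDerivAt_arccosC hx0 hxy
    have big := ((((hasDerivAt_const y (Real.pi * x^2)).add
        (hasDerivAt_const y (2*x*Real.sqrt (1-2*x)))).sub
        (hasDerivAt_const y (2*x^2*Real.arccos (x/(1-x))))).add
        (dDs.const_mul x)).sub (dE.const_mul (x^2))
    refine big.congr_deriv ?_
    field_simp
    ring
  · intro y hy
    rw [interior_Ici] at hy
    simp only [mem_Ioi] at hy
    have hxy : x < y := by linarith
    have hy0 : 0 < y := by linarith
    apply div_nonneg
    · apply mul_nonneg hx0.le
      nlinarith
    · positivity

private lemma psi_mono_x {y : ℝ} :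
    MonotoneOn (fun x => psi x y) (Icc (max (1/3) (1-y)) (1/2)) := by
  apply monotoneOn_of_hasDerivWithinAt_nonneg (convex_Icc _ _)
    (f' := fun x => 2*Real.pi*x - 4*x*Real.arccos (x/(1-x)) - 2*x*Real.arccos (x/y)
      + (2*Real.sqrt (1-2*x) - 2*x/Real.sqrt (1-2*x) + 2*x^2/((1-x)*Real.sqrt (1-2*x)))
      + Real.sqrt (y^2-x^2))
  · unfold psi
    apply ContinuousOn.sub
    · apply ContinuousOn.add
      · apply ContinuousOn.sub
        · apply ContinuousOn.add
          · exact (continuous_const.mul (continuous_pow 2)).continuousOn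
          · exact ((continuous_const.mul continuous_id).mul (Real.continuous_sqrt.comp
              (continuous_const.sub (continuous_const.mul continuous_id)))).continuousOn
        · apply ContinuousOn.mul
          · exact (continuous_const.mul (continuous_pow 2)).continuousOn
          · apply Real.continuous_arccos.comp_continuousOn
            apply ContinuousOn.div continuousOn_id
              (continuous_const.sub continuous_id).continuousOn
            intro x hx
            simp only [mem_Icc] at hx
            have : x ≤ 1/2 := hx.2
            simp only [Pi.sub_apply, id_eq]
            intro h; linarith [sub_eq_zero.mp h]
      · exact (continuous_id.mul (Real.continuous_sqrt.comp
          (continuous_const.sub (continuous_pow 2)))).continuousOn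
    · exact ((continuous_pow 2).mul (Real.continuous_arccos.comp
        (continuous_id.div_const y))).continuousOn
  · intro x hx
    rw [interior_Icc] at hx
    obtain ⟨hlo, hhi⟩ := hx
    have h13 : 1/3 < x := lt_of_le_of_lt (le_max_left _ _) hlo
    have h1y : 1 - y < x := lt_of_le_of_lt (le_max_right _ _) hlo
    have hx0 : 0 < x := by linarith
    have h1x : 0 < 1 - x := by linarith
    have hxy : x < y := by linarith
    have hs : 0 < Real.sqrt (1-2*x) := Real.sqrt_pos.mpr (by linarith)
    have ht : 0 < Real.sqrt (y^2-x^2) := Real.sqrt_pos.mpr (by nlinarith)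
    apply HasDerivAt.hasDerivWithinAt
    unfold psi
    have d1 := (hasDerivAt_pow 2 x).const_mul Real.pi
    have d2 : HasDerivAt (fun x : ℝ => 1 - 2 * x) (0 - 2 * 1) x :=
      (hasDerivAt_const x (1:ℝ)).sub ((hasDerivAt_id' (x := x)).const_mul 2)
    have d2s := d2.sqrt (by show (1:ℝ) - 2 * x ≠ 0; linarith)
    have d2full := ((hasDerivAt_id' (x := x)).const_mul (2:ℝ)).mul d2s
    have d3full := ((hasDerivAt_pow 2 x).const_mul (2:ℝ)).mul (hasDerivAt_arccosA hx0.le hhi)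
    have d4 : HasDerivAt (fun x : ℝ => y ^ 2 - x ^ 2) (0 - 2*x^1) x :=
      (hasDerivAt_const x (y^2)).sub (hasDerivAt_pow 2 x)
    have d4s := d4.sqrt (by show y^2 - x^2 ≠ 0; nlinarith)
    have d4full := (hasDerivAt_id' (x := x)).mul d4s
    have d5full := (hasDerivAt_pow 2 x).mul (hasDerivAt_arccosB hx0.le hxy)
    have big := (((d1.add d2full).sub d3full).add d4full).sub d5full
    refine big.congr_deriv ?_
    field_simp
    ring
  · intro x hx
    rw [interior_Icc] at hx
    obtain ⟨hlo, hhi⟩ := hx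
    have h13 : 1/3 < x := lt_of_le_of_lt (le_max_left _ _) hlo
    have h1y : 1 - y < x := lt_of_le_of_lt (le_max_right _ _) hlo
    have hx0 : 0 < x := by linarith
    have h1x : 0 < 1 - x := by linarith
    have hxy : x < y := by linarith
    have hy0 : 0 < y := by linarith
    have hs : 0 < Real.sqrt (1-2*x) := Real.sqrt_pos.mpr (by linarith)
    have hs2 : Real.sqrt (1-2*x) ^ 2 = 1-2*x := Real.sq_sqrt (by linarith)
    have ha := arccosA_le h13.le hhi.le
    have hb : Real.arccos (x/y) ≤ Real.pi/2 :=
      Real.arccos_le_pi_div_two.mpr (by positivity)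
    have htb := key_tb hx0 hxy.le
    have hbr : 2*Real.sqrt (1-2*x) - 2*x/Real.sqrt (1-2*x) + 2*x^2/((1-x)*Real.sqrt (1-2*x))
        = 2*(1-2*x)^2/((1-x)*Real.sqrt (1-2*x)) := by
      field_simp
      linear_combination (2*(1-x)^2*(Real.sqrt (1-2*x)^2+(1-2*x))
        + (-2*x*(1-x)^2+2*x^2*(1-x)-2*(1-2*x)^2*(1-x))
          + (-2*(1-x)^2*Real.sqrt (1-2*x)^2 + (1-x))) * hs2
    rw [hbr]
    have hbr0 : 0 ≤ 2*(1-2*x)^2/((1-x)*Real.sqrt (1-2*x)) := by positivity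
    have p1 : (4*x)*Real.arccos (x/(1-x)) ≤ (4*x)*(Real.pi/3) :=
      mul_le_mul_of_nonneg_left ha (by linarith)
    have p2 : x*Real.arccos (x/y) ≤ x*(Real.pi/2) :=
      mul_le_mul_of_nonneg_left hb (by linarith)
    have p4 : 0 ≤ Real.pi * x := mul_nonneg Real.pi_pos.le hx0.le
    nlinarith [p1, p2, p4, htb, hbr0]

private noncomputable def gg (x : ℝ) : ℝ :=
  Real.pi * x ^ 2 + 3 * x * Real.sqrt (1 - 2 * x) - 3 * x ^ 2 * Real.arccos (x / (1 - x))

private lemma psi_diag (x : ℝ) : psi x (1-x) = gg x := by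
  unfold psi gg
  rw [show (1-x) ^ 2 - x ^ 2 = 1 - 2 * x by ring]
  ring

private lemma gg_third : gg (1/3) = 1 / Real.sqrt 3 := by
  unfold gg
  rw [show (1:ℝ)/3/(1-1/3) = 1/2 by norm_num, show (1:ℝ) - 2*(1/3) = 3⁻¹ by norm_num,
    arccos_half, Real.sqrt_inv]
  have h3 : Real.sqrt 3 ≠ 0 := by positivity
  field_simp
  ring

private lemma gg_mono : MonotoneOn gg (Icc (1/3 : ℝ) (1/2)) := by
  apply monotoneOn_of_hasDerivWithinAt_nonneg (convex_Icc _ _)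
    (f' := fun x => 2*Real.pi*x - 6*x*Real.arccos (x/(1-x))
      + (3*Real.sqrt (1-2*x) - 3*x/Real.sqrt (1-2*x) + 3*x^2/((1-x)*Real.sqrt (1-2*x))))
  · unfold gg
    apply ContinuousOn.sub
    · apply ContinuousOn.add
      · exact (continuous_const.mul (continuous_pow 2)).continuousOn
      · exact ((continuous_const.mul continuous_id).mul (Real.continuous_sqrt.comp
          (continuous_const.sub (continuous_const.mul continuous_id)))).continuousOn
    · apply ContinuousOn.mul
      · exact (continuous_const.mul (continuous_pow 2)).continuousOn
      · apply Real.continuous_arccos.comp_continuousOn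
        apply ContinuousOn.div continuousOn_id
          (continuous_const.sub continuous_id).continuousOn
        intro x hx
        simp only [mem_Icc] at hx
        have : x ≤ 1/2 := hx.2
        simp only [Pi.sub_apply, id_eq]
        intro h; linarith [sub_eq_zero.mp h]
  · intro x hx
    rw [interior_Icc] at hx
    obtain ⟨hlo, hhi⟩ := hx
    have hx0 : 0 < x := by linarith
    have h1x : 0 < 1 - x := by linarith
    have hs : 0 < Real.sqrt (1-2*x) := Real.sqrt_pos.mpr (by linarith)
    apply HasDerivAt.hasDerivWithinAt
    unfold gg
    have d1 := (hasDerivAt_pow 2 x).const_mul Real.pi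
    have d2 : HasDerivAt (fun x : ℝ => 1 - 2 * x) (0 - 2 * 1) x :=
      (hasDerivAt_const x (1:ℝ)).sub ((hasDerivAt_id' (x := x)).const_mul 2)
    have d2s := d2.sqrt (by show (1:ℝ) - 2 * x ≠ 0; linarith)
    have d2full := ((hasDerivAt_id' (x := x)).const_mul (3:ℝ)).mul d2s
    have d3full := ((hasDerivAt_pow 2 x).const_mul (3:ℝ)).mul (hasDerivAt_arccosA hx0.le hhi)
    have big := (d1.add d2full).sub d3full
    refine big.congr_deriv ?_
    field_simp
    ring
  · intro x hx
    rw [interior_Icc] at hx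
    obtain ⟨hlo, hhi⟩ := hx
    have hx0 : 0 < x := by linarith
    have h1x : 0 < 1 - x := by linarith
    have hs : 0 < Real.sqrt (1-2*x) := Real.sqrt_pos.mpr (by linarith)
    have hs2 : Real.sqrt (1-2*x) ^ 2 = 1-2*x := Real.sq_sqrt (by linarith)
    have ha := arccosA_le hlo.le hhi.le
    have hbr : 3*Real.sqrt (1-2*x) - 3*x/Real.sqrt (1-2*x) + 3*x^2/((1-x)*Real.sqrt (1-2*x))
        = 3*(1-2*x)^2/((1-x)*Real.sqrt (1-2*x)) := by
      field_simp
      linear_combination (3*(1-x)^2*(Real.sqrt (1-2*x)^2+(1-2*x))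
        + (-3*x*(1-x)^2+3*x^2*(1-x)-3*(1-2*x)^2*(1-x))
          + (-3*(1-x)^2*Real.sqrt (1-2*x)^2 + (1-x))) * hs2
    rw [hbr]
    have hbr0 : 0 ≤ 3*(1-2*x)^2/((1-x)*Real.sqrt (1-2*x)) := by positivity
    have p1 : (6*x)*Real.arccos (x/(1-x)) ≤ (6*x)*(Real.pi/3) :=
      mul_le_mul_of_nonneg_left ha (by linarith)
    nlinarith [p1, hbr0]

end Helpers

/-- ψ is nondecreasing in both variables on its domain, and bounded below by 1/√3 there. -/
theorem psi_monotone_and_lower_bound :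
    (∀ x₁ x₂ y : ℝ, 1 / 3 ≤ x₁ → x₁ ≤ 1 / 2 → 1 / 3 ≤ x₂ → x₂ ≤ 1 / 2 →
      1 - x₁ ≤ y → 1 - x₂ ≤ y → x₁ ≤ x₂ → psi x₁ y ≤ psi x₂ y) ∧
    (∀ x y₁ y₂ : ℝ, 1 / 3 ≤ x → x ≤ 1 / 2 → 1 - x ≤ y₁ → y₁ ≤ y₂ →
      psi x y₁ ≤ psi x y₂) ∧
    (∀ x y : ℝ, 1 / 3 ≤ x → x ≤ 1 / 2 → 1 - x ≤ y → 1 / Real.sqrt 3 ≤ psi x y) := by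
  refine ⟨?_, ?_, ?_⟩
  · intro x₁ x₂ y ha1 ha2 hb1 hb2 hc1 hc2 hle
    exact psi_mono_x ⟨max_le ha1 (by linarith), ha2⟩ ⟨max_le hb1 (by linarith), hb2⟩ hle
  · intro x y₁ y₂ h1 h2 h3 h4
    exact psi_mono_y h1 h2 (mem_Ici.mpr h3) (mem_Ici.mpr (h3.trans h4)) h4
  · intro x y h1 h2 h3
    have e1 : psi x (1-x) ≤ psi x y :=
      psi_mono_y h1 h2 (mem_Ici.mpr le_rfl) (mem_Ici.mpr h3) h3
    have e2 : gg (1/3) ≤ gg x := gg_mono ⟨le_rfl, by norm_num⟩ ⟨h1, h2⟩ h1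
    rw [gg_third] at e2
    rw [psi_diag] at e1
    linarith
end

section
/- The function h(x) := πx − 4x·arccos(x/(1−x)) + √(1−2x) is strictly positive on the interval (1/3, 1/2). (It satisfies h(1/3) = (√3 − π/3)/3 > 0, h'(1/3) = √3 − π/3 > 0, and h is convex on (1/3, 1/2).) -/
open Metric Set MeasureTheory Pointwise

/-- The auxiliary function h is strictly positive on (1/3, 1/2). -/
theorem h_pos :
    ∀ x ∈ Set.Ioo (1 / 3 : ℝ) (1 / 2),
      0 < Real.pi * x - 4 * x * Real.arccos (x / (1 - x)) + Real.sqrt (1 - 2 * x) := by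
  intro x hx
  obtain ⟨h1, h2⟩ := hx
  have h1x : (0:ℝ) < 1 - x := by linarith
  have hx0 : (0:ℝ) < x := by linarith
  set t := x / (1 - x) with ht
  have ht0 : 0 ≤ t := le_of_lt (div_pos hx0 h1x)
  have ht1 : t ≤ 1 := by rw [ht, div_le_one h1x]; linarith
  have harcsin : t ≤ Real.arcsin t := by
    nth_rewrite 1 [← Real.sin_arcsin (by linarith) ht1]
    exact Real.sin_le (Real.arcsin_nonneg.2 ht0)
  have harc : Real.arccos t ≤ Real.pi / 2 - t := by
    rw [Real.arccos_eq_pi_div_two_sub_arcsin]; linarith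
  set s := Real.sqrt (1 - 2 * x) with hs
  have hs0 : 0 < s := Real.sqrt_pos.2 (by linarith)
  have hs2 : s ^ 2 = 1 - 2 * x := Real.sq_sqrt (by linarith)
  have htx : t * (1 - x) = x := div_mul_cancel₀ x (ne_of_gt h1x)
  have hpi : Real.pi < 3.15 := Real.pi_lt_d2
  have key : 0 < s + 4 * x * t - Real.pi * x := by
    have h315 : Real.pi * x < 3.15 * x := by nlinarith
    have hmain : 3.15 * x * (1 - x) < s * (1 - x) + 4 * x ^ 2 := by
      nlinarith [sq_nonneg (s - 1/2), sq_nonneg (s^2 - 1/3), sq_nonneg (s - 1),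
        mul_pos hs0 hs0, sq_nonneg (s^2 - s), hs0.le, sq_nonneg (s + 1),
        mul_nonneg (mul_nonneg hs0.le hs0.le) hs0.le]
    have h4 : 3.15 * x < s + 4 * x * t := by
      rw [← mul_lt_mul_iff_left₀ h1x]
      calc 3.15 * x * (1 - x) < s * (1 - x) + 4 * x ^ 2 := hmain
        _ = (s + 4 * x * t) * (1 - x) := by rw [add_mul, mul_assoc, mul_assoc, htx]; ring
    linarith
  have hb : 4 * x * Real.arccos t ≤ 4 * x * (Real.pi / 2 - t) := by
    apply mul_le_mul_of_nonneg_left harc (by linarith)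
  nlinarith [key]
end
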